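/- arXiv:2602.11867 — 8 statements merged into one kernel-verified Lean document; each statement's English description precedes it below -/
import Mathlib

section
/- Let n, a, b, p, q be positive integers with n = p·a = q·b, and suppose n − (p+q) is odd (so that the genus (n−(p+q)+1)/2 of the passport [a^p, b^q, n] is an integer). Then the following are equivalent: (1) Nat.gcd p q = 1; (2) there exist permutations x, y of Fin n such that every orbit of x has size a, every orbit of y has size b, x*y is an n-cycle, and the subgroup of Equiv.Perm (Fin n) generated by x and y has cardinality n. In other words, the tree passport [a^p, b^q, n] admits a regular dessin if and only if gcd(p, q) = 1. -/
/-- The orbit of `e` under the permutation `σ`: `{σ^k e : k ∈ ℤ}`. -/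
def permOrbit {E : Type*} (σ : Equiv.Perm E) (e : E) : Set E :=
  {f | ∃ k : ℤ, (σ ^ k) e = f}

/-- Every orbit of `σ` has exactly `a` elements. -/
def allOrbitsSize {E : Type*} (σ : Equiv.Perm E) (a : ℕ) : Prop :=
  ∀ e : E, (permOrbit σ e).ncard = a

/-!
If `x * y = c` is an `n`-cycle and the monodromy group has order `n`, that group is `⟨c⟩`, so
`x = c ^ k`, `y = c ^ l` with `k + l ≡ 1 [MOD n]`. Every orbit of `c ^ k` has size
`n / gcd(n, k)`, so the passport says exactly `gcd(n, k) = p` and `gcd(n, l) = q`; then `gcd(p, q)`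
divides `k + l` and `n`, hence `1`.

Conversely, start from `p u + q v ≡ 1 [MOD n]` and look for `s` with `u + q s` prime to `a` and
`v - p s` prime to `b`, so that `k = p (u + q s)` and `l = q (v - p s)` work with `c` the rotation
of `Fin n`. Modulo a prime `r`, each of the two conditions excludes at most one residue of `s`;
only `r = 2` could be fully excluded, and there the parity of `n - (p + q)` makes `p` or `q` even,
which disposes of one condition. The Chinese remainder theorem glues the local choices.
-/

open Function Subgroup

section Orbits

variable {E : Type*} {σ : Equiv.Perm E} {m : ℕ}

theorem ncard_permOrbit (σ : Equiv.Perm E) (e : E) :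
    (permOrbit σ e).ncard = minimalPeriod σ e := by
  have horbit : permOrbit σ e = MulAction.orbit (zpowers σ) e := by
    ext f
    constructor
    · rintro ⟨k, rfl⟩; exact ⟨⟨σ ^ k, k, rfl⟩, rfl⟩
    · rintro ⟨⟨_, k, rfl⟩, rfl⟩; exact ⟨k, rfl⟩
  rw [horbit, ← Nat.card_coe_set_eq, Nat.card_congr (MulAction.orbitZPowersEquiv σ e),
    Nat.card_zmod]
  rfl

theorem allOrbitsSize_iff : allOrbitsSize σ m ↔ ∀ e, minimalPeriod σ e = m := by
  simp only [allOrbitsSize, ncard_permOrbit]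

namespace allOrbitsSize

theorem unique [Nonempty E] {m' : ℕ} (h : allOrbitsSize σ m) (h' : allOrbitsSize σ m') :
    m = m' := by
  obtain ⟨e⟩ := ‹Nonempty E›
  rw [← h e, h' e]

theorem orderOf_eq [Nonempty E] (h : allOrbitsSize σ m) : orderOf σ = m := by
  rw [allOrbitsSize_iff] at h
  obtain ⟨e⟩ := ‹Nonempty E›
  refine Nat.dvd_antisymm (orderOf_dvd_of_pow_eq_one ?_) (h e ▸ MulAction.period_dvd_orderOf σ e)
  ext f
  rw [Equiv.Perm.coe_pow, Equiv.Perm.coe_one, id]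
  exact isPeriodicPt_iff_minimalPeriod_dvd.mpr (h f ▸ dvd_rfl)

theorem pow (h : allOrbitsSize σ m) (hm : 0 < m) (k : ℕ) :
    allOrbitsSize (σ ^ k) (m / m.gcd k) := by
  rw [allOrbitsSize_iff] at h ⊢
  intro e
  have hper : e ∈ periodicPts σ := minimalPeriod_pos_iff_mem_periodicPts.mp (h e ▸ hm)
  rw [Equiv.Perm.coe_pow, minimalPeriod_iterate_eq_div_gcd' hper, h e]

end allOrbitsSize

theorem allOrbitsSize_finRotate (n : ℕ) : allOrbitsSize (finRotate n) n := by
  intro e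
  have : NeZero n := NeZero.of_pos e.pos
  suffices permOrbit (finRotate n) e = Set.univ by rw [this, Set.ncard_univ, Nat.card_fin]
  refine Set.eq_univ_of_forall fun f => ⟨((f - e : Fin n) : ℕ), ?_⟩
  rw [zpow_natCast, Equiv.Perm.coe_pow, ← finCycle_eq_finRotate_iterate, finCycle_apply,
    add_sub_cancel]

end Orbits

theorem allOrbitsSize_pow_iff {E : Type*} [Nonempty E] {c : Equiv.Perm E} {n p a : ℕ}
    (hc : allOrbitsSize c n) (hn : 0 < n) (hpa : n = p * a) (k : ℕ) :
    allOrbitsSize (c ^ k) a ↔ n.gcd k = p := by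
  have hck := hc.pow hn k
  have ha : 0 < a := Nat.pos_of_mul_pos_left (hpa ▸ hn)
  have hp : 0 < p := Nat.pos_of_mul_pos_right (hpa ▸ hn)
  constructor
  · intro h
    have hdiv : n = n.gcd k * a := by
      rw [h.unique hck, Nat.mul_div_cancel' (Nat.gcd_dvd_left n k)]
    exact Nat.eq_of_mul_eq_mul_right ha (hdiv.symm.trans hpa)
  · intro h
    convert hck using 1
    rw [h, hpa, Nat.mul_div_cancel_left a hp]

section Cyclic

variable {G : Type*} [Group G] {x y : G}

theorem closure_pair_eq_zpowers_mul (hx : x ∈ zpowers (x * y)) (hy : y ∈ zpowers (x * y)) :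
    closure {x, y} = zpowers (x * y) :=
  le_antisymm ((closure_le _).mpr (Set.insert_subset hx (Set.singleton_subset_iff.mpr hy)))
    (zpowers_le.mpr (mul_mem (subset_closure (by simp)) (subset_closure (by simp))))

theorem closure_pair_eq_zpowers_mul_of_card_le [Finite G]
    (h : Nat.card (closure {x, y}) ≤ orderOf (x * y)) :
    closure {x, y} = zpowers (x * y) :=
  (eq_of_le_of_card_ge (zpowers_le.mpr (mul_mem (subset_closure (by simp))
    (subset_closure (by simp)))) (by rwa [Nat.card_zpowers])).symm

end Cyclic

theorem exists_regular_tree_dessin_iff {n p a q b : ℕ} (hn : 0 < n) (hpa : n = p * a)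
    (hqb : n = q * b) :
    (∃ x y : Equiv.Perm (Fin n),
        allOrbitsSize x a ∧ allOrbitsSize y b ∧ allOrbitsSize (x * y) n ∧
        Nat.card (closure ({x, y} : Set (Equiv.Perm (Fin n)))) = n) ↔
      ∃ k l : ℕ, n.gcd k = p ∧ n.gcd l = q ∧ k + l ≡ 1 [MOD n] := by
  have : NeZero n := ⟨hn.ne'⟩
  constructor
  · rintro ⟨x, y, hx, hy, hxy, hcard⟩
    have horder : orderOf (x * y) = n := hxy.orderOf_eq
    have hG := closure_pair_eq_zpowers_mul_of_card_le (hcard.trans horder.symm).le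
    obtain ⟨k, hk⟩ : ∃ k, (x * y) ^ k = x :=
      mem_powers_iff_mem_zpowers.mpr (hG ▸ subset_closure (by simp))
    obtain ⟨l, hl⟩ : ∃ l, (x * y) ^ l = y :=
      mem_powers_iff_mem_zpowers.mpr (hG ▸ subset_closure (by simp))
    refine ⟨k, l, (allOrbitsSize_pow_iff hxy hn hpa k).mp (by rwa [hk]),
      (allOrbitsSize_pow_iff hxy hn hqb l).mp (by rwa [hl]), ?_⟩
    rw [← horder, ← pow_eq_pow_iff_modEq, pow_add, hk, hl, pow_one]
  · rintro ⟨k, l, hk, hl, hkl⟩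
    have hc := allOrbitsSize_finRotate n
    have hmul : finRotate n ^ k * finRotate n ^ l = finRotate n := by
      have h : finRotate n ^ (k + l) = finRotate n ^ 1 :=
        pow_eq_pow_iff_modEq.mpr (by rwa [hc.orderOf_eq])
      rw [← pow_add, h, pow_one]
    refine ⟨_, _, (allOrbitsSize_pow_iff hc hn hpa k).mpr hk,
      (allOrbitsSize_pow_iff hc hn hqb l).mpr hl, by rwa [hmul], ?_⟩
    rw [closure_pair_eq_zpowers_mul (by rw [hmul]; exact pow_mem (mem_zpowers _) k)
      (by rw [hmul]; exact pow_mem (mem_zpowers _) l), hmul, Nat.card_zpowers, hc.orderOf_eq]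

theorem Nat.Coprime.of_gcd_eq_of_add_modEq_one {n p q k l : ℕ} (hk : n.gcd k = p)
    (hl : n.gcd l = q) (hkl : k + l ≡ 1 [MOD n]) : p.Coprime q := by
  have hpn : p.gcd q ∣ n := (Nat.gcd_dvd_left p q).trans (hk ▸ Nat.gcd_dvd_left n k)
  have hsum : p.gcd q ∣ k + l :=
    dvd_add ((Nat.gcd_dvd_left p q).trans (hk ▸ Nat.gcd_dvd_right n k))
      ((Nat.gcd_dvd_right p q).trans (hl ▸ Nat.gcd_dvd_right n l))
  exact Nat.dvd_one.mp ((hkl.dvd_iff hpn).mp hsum)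

theorem exists_add_mul_ne_zero_and_sub_mul_ne_zero {F : Type*} [Field F] [Fintype F]
    {P Q U V : F} (h : P * U + Q * V = 1) {α β : Prop}
    (hcard : α → β → P * Q ≠ 0 → 2 < Fintype.card F) :
    ∃ s : F, (α → U + Q * s ≠ 0) ∧ (β → V - P * s ≠ 0) := by
  have hU₀ : Q = 0 → ∀ s, U + Q * s ≠ 0 := fun hQ s => by
    rw [hQ, zero_mul, add_zero]
    exact right_ne_zero_of_mul_eq_one (by simpa [hQ] using h)
  have hV₀ : P = 0 → ∀ s, V - P * s ≠ 0 := fun hP s => by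
    rw [hP, zero_mul, sub_zero]
    exact right_ne_zero_of_mul_eq_one (by simpa [hP] using h)
  have hU : ∀ s, s ≠ -U / Q → U + Q * s ≠ 0 := fun s hs h0 => by
    rcases eq_or_ne Q 0 with hQ | hQ
    · exact hU₀ hQ s h0
    · exact hs (by field_simp; linear_combination h0)
  have hV : ∀ s, s ≠ V / P → V - P * s ≠ 0 := fun s hs h0 => by
    rcases eq_or_ne P 0 with hP | hP
    · exact hV₀ hP s h0
    · exact hs (by field_simp; linear_combination -h0)
  rcases lt_or_ge 2 (Fintype.card F) with h2 | h2
  · classical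
    obtain ⟨s, -, hs⟩ := Finset.exists_mem_notMem_of_card_lt_card
      (s := {-U / Q, V / P}) (t := Finset.univ) ((Finset.card_le_two).trans_lt h2)
    simp only [Finset.mem_insert, Finset.mem_singleton, not_or] at hs
    exact ⟨s, fun _ => hU s hs.1, fun _ => hV s hs.2⟩
  · have hdeg : ¬α ∨ ¬β ∨ P = 0 ∨ Q = 0 := by
      by_contra! hcon
      exact h2.not_gt (hcard hcon.1 hcon.2.1 (mul_ne_zero hcon.2.2.1 hcon.2.2.2))
    obtain ⟨s, hs⟩ := exists_ne (-U / Q)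
    obtain ⟨t, ht⟩ := exists_ne (V / P)
    rcases hdeg with hα | hβ | hP | hQ
    · exact ⟨t, fun h => absurd h hα, fun _ => hV t ht⟩
    · exact ⟨s, fun _ => hU s hs, fun h => absurd h hβ⟩
    · exact ⟨s, fun _ => hU s hs, fun _ => hV₀ hP s⟩
    · exact ⟨t, fun _ => hU₀ hQ t, fun _ => hV t ht⟩

theorem Nat.Coprime.exists_mul_add_mul_modEq_one {p q : ℕ} (hpq : p.Coprime q) (n : ℕ)
    [NeZero n] : ∃ u v : ℕ, p * u + q * v ≡ 1 [MOD n] := by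
  obtain ⟨A, B, h⟩ := (Nat.isCoprime_iff_coprime.mpr hpq).map (Int.castRingHom (ZMod n))
  refine ⟨A.val, B.val, (ZMod.natCast_eq_natCast_iff _ _ _).mp ?_⟩
  simp only [eq_intCast, Int.cast_natCast] at h
  push_cast
  rw [ZMod.natCast_zmod_val, ZMod.natCast_zmod_val]
  linear_combination h

theorem exists_natCast_eq_of_prime_dvd {n : ℕ} (hn : n ≠ 0) (t : ℕ → ℕ) :
    ∃ s : ℕ, ∀ r, r.Prime → r ∣ n → (s : ZMod r) = t r := by
  obtain ⟨s, hs⟩ := Nat.chineseRemainderOfFinset t id n.primeFactors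
    (fun r hr => (Nat.prime_of_mem_primeFactors hr).ne_zero)
    (fun r hr r' hr' hne => (Nat.coprime_primes (Nat.prime_of_mem_primeFactors hr)
      (Nat.prime_of_mem_primeFactors hr')).mpr hne)
  exact ⟨s, fun r hr hrn =>
    (ZMod.natCast_eq_natCast_iff _ _ _).mpr (hs r (Nat.mem_primeFactors.mpr ⟨hr, hrn, hn⟩))⟩

theorem Nat.gcd_mul_eq_left_of_natCast_ne_zero {n p a u : ℕ} (hpa : n = p * a)
    (h : ∀ r, r.Prime → r ∣ a → (u : ZMod r) ≠ 0) : n.gcd (p * u) = p := by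
  have hau : a.Coprime u := Nat.coprime_of_dvd fun r hr hra hru =>
    h r hr hra ((ZMod.natCast_eq_zero_iff u r).mpr hru)
  rw [hpa, Nat.gcd_mul_left, hau.gcd_eq_one, mul_one]

theorem exists_gcd_eq_and_add_modEq_one {n p a q b : ℕ} (hn : 0 < n) (hpa : n = p * a)
    (hqb : n = q * b) (hpq : p.Coprime q) (hpar : 2 ∣ n → 2 ∣ p * q) :
    ∃ k l : ℕ, n.gcd k = p ∧ n.gcd l = q ∧ k + l ≡ 1 [MOD n] := by
  have : NeZero n := ⟨hn.ne'⟩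
  obtain ⟨u, v, huv⟩ := hpq.exists_mul_add_mul_modEq_one n
  -- `(n - 1) * t` stands for `-t` modulo `n`
  have hlocal : ∀ r, ∃ t : ℕ, r.Prime → r ∣ n →
      (r ∣ a → ((u + q * t : ℕ) : ZMod r) ≠ 0) ∧
      (r ∣ b → ((v + p * ((n - 1) * t) : ℕ) : ZMod r) ≠ 0) := by
    intro r
    by_cases h : r.Prime ∧ r ∣ n
    swap
    · exact ⟨0, fun hr hrn => absurd ⟨hr, hrn⟩ h⟩
    obtain ⟨hr, hrn⟩ := h
    have : Fact r.Prime := ⟨hr⟩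
    have hbez : (p : ZMod r) * u + q * v = 1 := by
      exact_mod_cast (ZMod.natCast_eq_natCast_iff _ _ r).mpr (huv.of_dvd hrn)
    have hcard : r ∣ a → r ∣ b → (p : ZMod r) * q ≠ 0 → 2 < Fintype.card (ZMod r) := by
      intro _ _ hpq0
      rw [ZMod.card]
      refine hr.two_le.lt_of_ne fun hr2 => hpq0 ?_
      subst hr2
      exact_mod_cast (ZMod.natCast_eq_zero_iff _ 2).mpr (hpar hrn)
    obtain ⟨σ, hσ⟩ := exists_add_mul_ne_zero_and_sub_mul_ne_zero hbez hcard
    refine ⟨σ.val, fun _ _ => ?_⟩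
    push_cast [Nat.cast_pred hn, (ZMod.natCast_eq_zero_iff n r).mpr hrn, ZMod.natCast_zmod_val]
    simpa [sub_eq_add_neg] using hσ
  choose t ht using hlocal
  obtain ⟨s, hs⟩ := exists_natCast_eq_of_prime_dvd hn.ne' t
  refine ⟨p * (u + q * s), q * (v + p * ((n - 1) * s)),
    Nat.gcd_mul_eq_left_of_natCast_ne_zero hpa fun r hr hra => ?_,
    Nat.gcd_mul_eq_left_of_natCast_ne_zero hqb fun r hr hrb => ?_, ?_⟩
  · have hrn : r ∣ n := hpa ▸ dvd_mul_of_dvd_right hra p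
    have := (ht r hr hrn).1 hra
    push_cast at this ⊢
    rwa [hs r hr hrn]
  · have hrn : r ∣ n := hqb ▸ dvd_mul_of_dvd_right hrb q
    have := (ht r hr hrn).2 hrb
    push_cast at this ⊢
    rwa [hs r hr hrn]
  · have := (ZMod.natCast_eq_natCast_iff _ _ n).mpr huv
    rw [← ZMod.natCast_eq_natCast_iff]
    push_cast [Nat.cast_pred hn, ZMod.natCast_self] at this ⊢
    linear_combination this

theorem tree_passport_regular_iff_gcd_one_general
    (n a b p q : ℕ) (hn : 0 < n)
    (hpa : n = p * a) (hqb : n = q * b)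
    (hodd : Odd ((n : ℤ) - (p + q))) :
    Nat.gcd p q = 1 ↔
      ∃ x y : Equiv.Perm (Fin n),
        allOrbitsSize x a ∧ allOrbitsSize y b ∧ allOrbitsSize (x * y) n ∧
        Nat.card (Subgroup.closure ({x, y} : Set (Equiv.Perm (Fin n)))) = n := by
  have hpar : 2 ∣ n → 2 ∣ p * q := by
    rintro ⟨m, hm⟩
    rw [← even_iff_two_dvd, ← Nat.not_odd_iff_even, Nat.odd_mul]
    rintro ⟨⟨i, rfl⟩, ⟨j, rfl⟩⟩
    obtain ⟨w, hw⟩ := hodd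
    push_cast at hw
    omega
  rw [exists_regular_tree_dessin_iff hn hpa hqb]
  exact ⟨fun hpq => exists_gcd_eq_and_add_modEq_one hn hpa hqb hpq hpar,
    fun ⟨_, _, hk, hl, hkl⟩ => Nat.Coprime.of_gcd_eq_of_add_modEq_one hk hl hkl⟩

/-- A tree passport `[a^p, b^q, n]` admits a regular dessin iff `gcd(p, q) = 1`. -/
theorem tree_passport_regular_iff_gcd_one
    (n a b p q : ℕ) (hn : 0 < n) (ha : 0 < a) (hb : 0 < b) (hp : 0 < p) (hq : 0 < q)
    (hpa : n = p * a) (hqb : n = q * b)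
    (hodd : Odd ((n : ℤ) - (p + q))) :
    Nat.gcd p q = 1 ↔
      ∃ x y : Equiv.Perm (Fin n),
        allOrbitsSize x a ∧ allOrbitsSize y b ∧ allOrbitsSize (x * y) n ∧
        Nat.card (Subgroup.closure ({x, y} : Set (Equiv.Perm (Fin n)))) = n :=
  tree_passport_regular_iff_gcd_one_general n a b p q hn hpa hqb hodd
end

section
/- Let b, q be positive integers, n = q·b, and suppose q·(b−1) is even (so that the genus of the passport [n, b^q, n] is an integer). Then there exist permutations x, y of Fin n such that x is an n-cycle, every orbit of y has size b, x*y is an n-cycle, and the subgroup of Equiv.Perm (Fin n) generated by x and y has cardinality n; i.e., the passport [n, b^q, n] always admits a regular dessin. -/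
namespace Nat

theorem exists_coprime_mul_add_one_coprime_of_prime (q : ℕ) {p : ℕ} (hp : p.Prime)
    (hpq : Odd p ∨ Even q) : ∃ k, k.Coprime p ∧ (q * k + 1).Coprime p := by
  by_cases hdvd : p ∣ q + 1
  · have hp_odd : Odd p := hpq.elim id fun hq => hq.add_one.of_dvd_nat hdvd
    refine ⟨2, coprime_two_left.2 hp_odd, coprime_comm.2 ((hp.coprime_iff_not_dvd).2 ?_)⟩
    intro h
    -- `q ≡ -1 [MOD p]`, so `q * 2 + 1 ≡ -1`
    have : p ∣ q * 2 + 1 + 1 := by simpa [add_mul, add_assoc] using hdvd.mul_right 2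
    exact hp.one_lt.ne' (Nat.dvd_one.1 ((Nat.dvd_add_right h).1 this))
  · refine ⟨1, coprime_one_left p, coprime_comm.2 ((hp.coprime_iff_not_dvd).2 ?_)⟩
    rwa [mul_one]

theorem exists_coprime_mul_add_one_coprime (q : ℕ) {b : ℕ} (hb : 0 < b)
    (hbq : Odd b ∨ Even q) : ∃ k, k.Coprime b ∧ (q * k + 1).Coprime b := by
  induction b using recOnPosPrimePosCoprime with
  | zero => exact absurd hb (lt_irrefl 0)
  | one => exact ⟨1, coprime_one_right _, coprime_one_right _⟩
  | prime_pow p i hp hi =>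
    have hpq : Odd p ∨ Even q := hbq.imp_left fun h => (odd_pow_iff hi.ne').1 h
    obtain ⟨k, hk, hqk⟩ := exists_coprime_mul_add_one_coprime_of_prime q hp hpq
    exact ⟨k, hk.pow_right i, hqk.pow_right i⟩
  | coprime a c ha hc hac iha ihc =>
    obtain ⟨k₁, hk₁, hqk₁⟩ := iha (by omega) (hbq.imp_left fun h => (odd_mul.1 h).1)
    obtain ⟨k₂, hk₂, hqk₂⟩ := ihc (by omega) (hbq.imp_left fun h => (odd_mul.1 h).2)
    obtain ⟨k, hka, hkc⟩ := chineseRemainder hac k₁ k₂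
    refine ⟨k, Coprime.mul_right ?_ ?_, Coprime.mul_right ?_ ?_⟩
    · exact hka.gcd_eq.trans hk₁
    · exact hkc.gcd_eq.trans hk₂
    · exact (hka.mul_left q |>.add_right 1).gcd_eq.trans hqk₁
    · exact (hkc.mul_left q |>.add_right 1).gcd_eq.trans hqk₂

theorem odd_or_even_of_even_mul_sub_one {b q : ℕ} (hb : 0 < b) (h : Even (q * (b - 1))) :
    Odd b ∨ Even q := by
  rcases even_mul.1 h with hq | ⟨t, ht⟩
  · exact Or.inr hq
  · exact Or.inl ⟨t, by omega⟩

end Nat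

section Translation

variable {A : Type*} [AddGroup A]

theorem permOrbit_addLeft (a e : A) :
    permOrbit (Equiv.addLeft a) e = (· + e) '' (AddSubgroup.zmultiples a : Set A) := by
  ext f
  simp [permOrbit, Equiv.zsmul_addLeft, AddSubgroup.mem_zmultiples_iff, eq_add_neg_iff_add_eq]

theorem allOrbitsSize_addLeft (a : A) : allOrbitsSize (Equiv.addLeft a) (addOrderOf a) := by
  intro e
  rw [permOrbit_addLeft, Set.ncard_image_of_injective _ (add_left_injective e),
    ← Nat.card_coe_set_eq, SetLike.coe_sort_coe, Nat.card_zmultiples]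

theorem orderOf_addLeft (a : A) : orderOf (Equiv.addLeft a) = addOrderOf a := by
  rw [← addOrderOf_ofMul_eq_orderOf]
  exact addOrderOf_injective (AddAction.toPermHom A A) AddAction.toPerm_injective a

theorem allOrbitsSize_addLeft_pow (a : A) (m : ℕ) :
    allOrbitsSize (Equiv.addLeft a ^ m) (orderOf (Equiv.addLeft a ^ m)) := by
  rw [Equiv.nsmul_addLeft, orderOf_addLeft]
  exact allOrbitsSize_addLeft _

end Translation

theorem Subgroup.closure_pair_pow {G : Type*} [Group G] (g : G) (m : ℕ) :
    Subgroup.closure {g, g ^ m} = Subgroup.zpowers g :=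
  le_antisymm
    (Subgroup.closure_le _ |>.2 <| Set.insert_subset_iff.2
      ⟨Subgroup.mem_zpowers g, Set.singleton_subset_iff.2 (Subgroup.npow_mem_zpowers g m)⟩)
    (Subgroup.zpowers_le.2 (Subgroup.subset_closure (Set.mem_insert _ _)))

theorem Fin.addOrderOf_one (n : ℕ) [NeZero n] : addOrderOf (1 : Fin n) = n := by
  rw [← (ZMod.finEquiv n).toAddEquiv.addOrderOf_eq]
  simp

/-- The passport `[n, b^q, n]` always admits a regular dessin. -/
theorem passport_n_bq_n_admits_regular (b q : ℕ) (hb : 0 < b) (hq : 0 < q)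
    (n : ℕ) (hn : n = q * b) (heven : Even (q * (b - 1))) :
    ∃ x y : Equiv.Perm (Fin n),
      allOrbitsSize x n ∧ allOrbitsSize y b ∧ allOrbitsSize (x * y) n ∧
      Nat.card (Subgroup.closure ({x, y} : Set (Equiv.Perm (Fin n)))) = n := by
  subst hn
  have : NeZero (q * b) := ⟨by positivity⟩
  obtain ⟨k, hk, hqk⟩ :=
    Nat.exists_coprime_mul_add_one_coprime q hb (Nat.odd_or_even_of_even_mul_sub_one hb heven)
  have hgcd : (q * b).gcd (q * k) = q := by rw [Nat.gcd_mul_left, hk.symm, mul_one]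
  have hcop : (q * b).Coprime (q * k + 1) := Nat.Coprime.mul_left
    ((Nat.coprime_mul_left_add_right q 1 k).2 (Nat.coprime_one_right q)) hqk.symm
  let x := Equiv.addLeft (1 : Fin (q * b))
  have hx : orderOf x = q * b := by rw [orderOf_addLeft, Fin.addOrderOf_one]
  refine ⟨x, x ^ (q * k), ?_, ?_, ?_, ?_⟩
  · have := allOrbitsSize_addLeft (1 : Fin (q * b))
    rwa [Fin.addOrderOf_one] at this
  · have := allOrbitsSize_addLeft_pow (1 : Fin (q * b)) (q * k)
    rwa [orderOf_pow, hx, hgcd, Nat.mul_div_cancel_left b hq] at this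
  · have := allOrbitsSize_addLeft_pow (1 : Fin (q * b)) (q * k + 1)
    rwa [orderOf_pow, hx, hcop, Nat.div_one, pow_succ'] at this
  · rw [Subgroup.closure_pair_pow, Nat.card_zpowers, hx]
end

section
/- Let b, q be positive integers, n = b·q, and let m be a divisor of n with 2 ≤ m < n. Let x be the permutation of ZMod n given by k ↦ k + 1, and let I_m denote the number of permutations y of ZMod n such that every orbit of y has size b and y maps each residue class modulo m (each fiber of the natural reduction map ZMod n → ZMod m) onto a residue class modulo m (equivalently, the m residue classes modulo m form a system of blocks for the subgroup generated by x and y). Then, as an identity of rational numbers, I_m = (m! / b^q) · ((n/m)!)^m · S, where S is the sum over all finitely supported functions t : ℕ → ℕ satisfying ∑_d d·t(d) = m and such that t(d) ≠ 0 implies d ∣ b and m ∣ d·q, of the products ∏_{d with t(d) ≠ 0} (1 / (d^{t(d)} · t(d)!)) · ( d^{d·q/m} / ((d·q/m)!) )^{t(d)}. -/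
open Equiv Function
open scoped Nat

section MinimalPeriod

variable {α β : Type*}

theorem permOrbit_eq_orbit_zpowers (σ : Perm α) (x : α) :
    permOrbit σ x = MulAction.orbit (Subgroup.zpowers σ) x := by
  ext y
  constructor
  · rintro ⟨k, rfl⟩
    exact ⟨⟨σ ^ k, k, rfl⟩, rfl⟩
  · rintro ⟨⟨_, k, rfl⟩, rfl⟩
    exact ⟨k, rfl⟩

theorem ncard_permOrbit_s5 [Finite α] (σ : Perm α) (x : α) :
    (permOrbit σ x).ncard = minimalPeriod σ x := by
  rw [permOrbit_eq_orbit_zpowers, ← Nat.card_coe_set_eq,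
    Nat.card_congr (MulAction.orbitZPowersEquiv σ x), Nat.card_zmod]
  rfl

theorem allOrbitsSize_iff_s5 [Finite α] (σ : Perm α) (a : ℕ) :
    allOrbitsSize σ a ↔ ∀ x, minimalPeriod σ x = a := by
  simp only [allOrbitsSize, ncard_permOrbit_s5]

theorem Function.Injective.minimalPeriod_eq_of_semiconj {f : α → β} (hf : Injective f)
    {ga : α → α} {gb : β → β} (h : Semiconj f ga gb) (x : α) :
    minimalPeriod gb (f x) = minimalPeriod ga x :=
  minimalPeriod_eq_minimalPeriod_iff.2 fun n => by
    simp only [IsPeriodicPt, IsFixedPt, ← (h.iterate_right n).eq, hf.eq_iff]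

theorem Equiv.Perm.minimalPeriod_subtypePerm (σ : Perm α) {p : α → Prop}
    (h : ∀ x, p (σ x) ↔ p x) (x : {x // p x}) :
    minimalPeriod (σ.subtypePerm h) x = minimalPeriod σ x :=
  (Subtype.val_injective.minimalPeriod_eq_of_semiconj (fun _ => rfl) x).symm

theorem minimalPeriod_add_right_one (l : ℕ) (z : ZMod l) :
    minimalPeriod (· + (1 : ZMod l)) z = l := by
  refine Nat.dvd_right_iff_eq.1 fun n => ?_
  rw [← isPeriodicPt_iff_minimalPeriod_dvd, IsPeriodicPt, IsFixedPt, add_right_iterate,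
    add_eq_left, nsmul_one, ZMod.natCast_eq_zero_iff]

theorem iterate_eq_iterate_of_natCast_eq {f : α → α} {x : α} {c : ℕ}
    (hx : minimalPeriod f x = c) {n n' : ℕ} (h : (n : ZMod c) = n') : f^[n] x = f^[n'] x := by
  rw [← iterate_mod_minimalPeriod_eq, ← iterate_mod_minimalPeriod_eq (n := n'), hx,
    ← ZMod.val_natCast, h, ZMod.val_natCast]

end MinimalPeriod

section CycleCoordinates

variable {α E F : Type*}

theorem Equiv.Perm.exists_equiv_zmod_prod_quotient [Finite α] {σ : Perm α} {c : ℕ} [NeZero c]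
    (hσ : ∀ x, minimalPeriod σ x = c) :
    ∃ ρ : ZMod c × Quotient (SameCycle.setoid σ) ≃ α,
      ∀ u ω, σ (ρ (u, ω)) = ρ (u + 1, ω) := by
  let ρ : ZMod c × Quotient (SameCycle.setoid σ) → α := fun p => (σ ^ p.1.val) p.2.out
  have hρ : ∀ u ω, σ (ρ (u, ω)) = ρ (u + 1, ω) := fun u ω => by
    simp only [ρ, Perm.coe_pow, ← iterate_succ_apply' σ]
    exact iterate_eq_iterate_of_natCast_eq (hσ _) (by simp)
  have hinj : Injective ρ := by
    rintro ⟨u, ω⟩ ⟨u', ω'⟩ h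
    have hω : ω = ω' := by
      rw [← Quotient.out_eq ω, ← Quotient.out_eq ω']
      have h1 : σ.SameCycle ω.out (ρ (u, ω)) := sameCycle_pow_right.2 (SameCycle.refl σ _)
      have h2 : σ.SameCycle ω'.out (ρ (u', ω')) := sameCycle_pow_right.2 (SameCycle.refl σ _)
      exact Quotient.sound (h1.trans (h ▸ h2.symm))
    subst hω
    have hlt : ∀ w : ZMod c, w.val ∈ Set.Iio (minimalPeriod σ ω.out) := fun w => by
      simpa [hσ] using w.val_lt
    have hval : u.val = u'.val :=
      iterate_injOn_Iio_minimalPeriod (hlt u) (hlt u') (by simpa [ρ, Perm.coe_pow] using h)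
    rw [ZMod.val_injective c hval]
  have hsurj : Surjective ρ := fun x => by
    set ω : Quotient (SameCycle.setoid σ) := ⟦x⟧
    obtain ⟨i, -, hi⟩ := (Quotient.exact ω.out_eq : σ.SameCycle ω.out x).exists_pow_eq'
    refine ⟨((i : ZMod c), ω), ?_⟩
    have := iterate_mod_minimalPeriod_eq (f := σ) (x := ω.out) (n := i)
    rw [hσ, ← Perm.coe_pow, ← Perm.coe_pow, hi] at this
    simpa [ρ, Perm.coe_pow] using this
  exact ⟨Equiv.ofBijective ρ ⟨hinj, hsurj⟩, hρ⟩

theorem Equiv.Perm.dvd_card_of_minimalPeriod_eq [Finite α] {σ : Perm α} {c : ℕ} (hc : 0 < c)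
    (hσ : ∀ x, minimalPeriod σ x = c) : c ∣ Nat.card α := by
  have : NeZero c := ⟨hc.ne'⟩
  obtain ⟨ρ, -⟩ := exists_equiv_zmod_prod_quotient hσ
  rw [← Nat.card_congr ρ, Nat.card_prod, Nat.card_zmod]
  exact dvd_mul_right c _

theorem Equiv.Perm.exists_equiv_zmod_prod_fin [Finite α] {σ : Perm α} {c k : ℕ} [NeZero c]
    (hσ : ∀ x, minimalPeriod σ x = c) (hcard : Nat.card α = c * k) :
    ∃ ρ : ZMod c × Fin k ≃ α, ∀ u v, σ (ρ (u, v)) = ρ (u + 1, v) := by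
  obtain ⟨ρ, hρ⟩ := exists_equiv_zmod_prod_quotient hσ
  have hk : Nat.card (Fin k) = Nat.card (Quotient (SameCycle.setoid σ)) := by
    rw [← Nat.card_congr ρ, Nat.card_prod, Nat.card_zmod] at hcard
    rw [Nat.card_eq_fintype_card, Fintype.card_fin,
      Nat.eq_of_mul_eq_mul_left (Nat.pos_of_neZero c) hcard]
  obtain ⟨e⟩ := Finite.card_eq.mp hk
  exact ⟨(Equiv.prodCongr (Equiv.refl _) e).trans ρ, fun u v => hρ u (e v)⟩

theorem exists_equiv_zmod_prod_fiber [Finite E] {π : E → F} {y : Perm E} {τ : Perm F}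
    (hτ : Semiconj π y τ) {b d n : ℕ} (hb : 0 < b) (hdb : d ∣ b)
    (hy : ∀ e, minimalPeriod y e = b) {f : F} (hf : minimalPeriod τ f = d)
    (hcard : Nat.card {e // π e = f} = b / d * n) :
    ∃ ρ : ZMod (b / d) × Fin n ≃ {e // π e = f},
      ∀ u v, (y^[d] (ρ (u, v)) : E) = ρ (u + 1, v) := by
  have hd : 0 < d := Nat.pos_of_dvd_of_pos hdb hb
  have : NeZero (b / d) := ⟨(Nat.div_pos (Nat.le_of_dvd hb hdb) hd).ne'⟩
  have hfix : τ^[d] f = f := hf ▸ iterate_minimalPeriod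
  have hX : ∀ e, π ((y ^ d) e) = f ↔ π e = f := fun e => by
    rw [Perm.coe_pow, (hτ.iterate_right d) e]
    conv_lhs => rw [← hfix]
    exact (τ.injective.iterate d).eq_iff
  have hper : ∀ e, minimalPeriod ((y ^ d).subtypePerm (p := (π · = f)) hX) e = b / d :=
    fun e => by
      rw [Perm.minimalPeriod_subtypePerm, Perm.coe_pow, minimalPeriod_iterate_eq_div_gcd hd.ne',
        hy, Nat.gcd_eq_right hdb]
  obtain ⟨ρ, hρ⟩ := Perm.exists_equiv_zmod_prod_fin hper hcard
  exact ⟨ρ, fun u v => by simpa [Perm.coe_pow] using congrArg Subtype.val (hρ u v)⟩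

theorem eq_of_iterate_apply_eq_of_modEq {y : α → α} (hy : Injective y) {V : Type*} {d c : ℕ}
    {g : ZMod c × V → α} (hg : Injective g) (hgy : ∀ u v, y^[d] (g (u, v)) = g (u + 1, v))
    {z z' : ℕ} (hz : z < d * c) (hz' : z' < d * c) (hzz : z ≡ z' [MOD d]) {v v' : V}
    (h : y^[z] (g (0, v)) = y^[z'] (g (0, v'))) : z = z' ∧ v = v' := by
  wlog hle : z' ≤ z generalizing z z' v v'
  · obtain ⟨h1, h2⟩ := this hz' hz hzz.symm h.symm (le_of_not_ge hle)
    exact ⟨h1.symm, h2.symm⟩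
  have hiter : ∀ w u, y^[d * w] (g (u, v)) = g (u + w, v) := by
    intro w
    induction w with
    | zero => simp
    | succ w ih =>
      intro u
      rw [Nat.mul_succ, iterate_add_apply, hgy, ih]
      congr 2
      push_cast
      ring
  obtain ⟨w, hw⟩ : d ∣ z - z' := (Nat.modEq_iff_dvd' hle).1 hzz.symm
  have hdiff : y^[z - z'] (g (0, v)) = g (0, v') :=
    hy.iterate z' (by rw [← iterate_add_apply, Nat.add_sub_cancel' hle, h])
  rw [hw, hiter] at hdiff
  obtain ⟨hw0, rfl⟩ := Prod.ext_iff.1 (hg hdiff)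
  rw [zero_add, ZMod.natCast_eq_zero_iff] at hw0
  have : z - z' = 0 := Nat.eq_zero_of_dvd_of_lt (hw ▸ Nat.mul_dvd_mul_left d hw0) (by omega)
  exact ⟨by omega, rfl⟩

end CycleCoordinates

section PermutesFibers

variable {E F : Type*}

def permutesFibers (π : E → F) : Subgroup (Perm E) where
  carrier := {h | ∃ τ : Perm F, Semiconj π h τ}
  mul_mem' := fun ⟨τ, hτ⟩ ⟨τ', hτ'⟩ => ⟨τ * τ', hτ.comp_right hτ'⟩
  one_mem' := ⟨1, fun _ => rfl⟩
  inv_mem' := fun ⟨τ, hτ⟩ =>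
    ⟨τ⁻¹, hτ.inverses_right (Equiv.apply_symm_apply _) (Equiv.symm_apply_apply _)⟩

variable {π : E → F} {s : ℕ}

theorem perm_eq_of_semiconj (hπ : Surjective π) {h : Perm E} {τ τ' : Perm F}
    (hτ : Semiconj π h τ) (hτ' : Semiconj π h τ') : τ = τ' := by
  ext i
  obtain ⟨e, rfl⟩ := hπ i
  rw [← hτ e, hτ' e]

theorem exists_semiconj_of_respects [Finite F] (hπ : Surjective π) {h : Perm E}
    (hh : ∀ e e', π e = π e' → π (h e) = π (h e')) : ∃ τ : Perm F, Semiconj π h τ := by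
  have hτ : Semiconj π h (fun i => π (h (surjInv hπ i))) := fun e =>
    hh _ _ (surjInv_eq hπ (π e)).symm
  have hsurj : Surjective (fun i => π (h (surjInv hπ i))) := fun i => by
    obtain ⟨e, rfl⟩ := hπ i
    exact ⟨π (h⁻¹ e), (hτ (h⁻¹ e)).symm.trans (by simp)⟩
  exact ⟨Equiv.ofBijective _ ⟨Finite.injective_iff_surjective.2 hsurj, hsurj⟩, hτ⟩

theorem forall_image_preimage_iff [Finite F] (hπ : Surjective π) (y : Perm E) :
    (∀ i, ∃ j, y '' (π ⁻¹' {i}) = π ⁻¹' {j}) ↔ ∃ τ : Perm F, Semiconj π y τ := by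
  constructor
  · intro h
    choose j hj using h
    have hy : ∀ e, π (y e) = j (π e) := fun e => by
      have : y e ∈ y '' (π ⁻¹' {π e}) := Set.mem_image_of_mem y rfl
      rwa [hj] at this
    exact exists_semiconj_of_respects hπ fun e e' he => by rw [hy, hy, he]
  · rintro ⟨τ, hτ⟩ i
    refine ⟨τ i, Set.ext fun e => ⟨?_, fun he => ⟨y⁻¹ e, ?_, by simp⟩⟩⟩
    · rintro ⟨e, rfl, rfl⟩
      exact hτ e
    · apply τ.injective
      rw [← hτ]
      simpa using he

theorem surjective_of_card_fiber (hs : 0 < s) (hfib : ∀ i, Nat.card {e // π e = i} = s) :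
    Surjective π := fun i => by
  obtain ⟨e, he⟩ := (Nat.card_pos_iff.1 (hfib i ▸ hs)).1.some
  exact ⟨e, he⟩

theorem card_eq_mul_of_card_fiber [Finite E] [Finite F]
    (hfib : ∀ i, Nat.card {e // π e = i} = s) : Nat.card E = Nat.card F * s := by
  have := Fintype.ofFinite F
  rw [← Nat.card_congr (Equiv.sigmaFiberEquiv π), Nat.card_sigma]
  simp [hfib]

theorem exists_equiv_of_card_fiber {E' F' : Type*} [Finite E] [Finite E'] {π' : E' → F'}
    (hfib : ∀ i, Nat.card {e // π e = i} = s) (hfib' : ∀ i, Nat.card {e // π' e = i} = s)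
    (β : F ≃ F') : ∃ Ψ : E ≃ E', ∀ e, π' (Ψ e) = β (π e) := by
  have hcard : ∀ i, Nat.card {e // β (π e) = i} = Nat.card {e // π' e = i} := fun i => by
    rw [hfib', ← hfib (β.symm i)]
    exact Nat.card_congr (Equiv.subtypeEquivRight fun e => β.eq_symm_apply.symm)
  exact ⟨Equiv.ofFiberEquiv fun i => (Finite.card_eq.1 (hcard i)).some,
    Equiv.ofFiberEquiv_map _⟩

variable [Fintype E] [DecidableEq E] [Fintype F] [DecidableEq F]

theorem card_semiconj (hfib : ∀ i, Nat.card {e // π e = i} = s) (τ : Perm F) :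
    Nat.card {h : Perm E // Semiconj π h τ} = s ! ^ Fintype.card F := by
  obtain ⟨h₀, hh₀⟩ : ∃ h₀ : Perm E, Semiconj π h₀ τ :=
    exists_equiv_of_card_fiber hfib hfib τ
  have hh₀' : Semiconj π ⇑h₀⁻¹ ⇑τ⁻¹ :=
    hh₀.inverses_right (Equiv.apply_symm_apply _) (Equiv.symm_apply_apply _)
  have key : ∀ h : Perm E, Semiconj π h τ ↔ π ∘ ⇑(h₀⁻¹ * h) = π := fun h => by
    refine ⟨fun hh => funext fun e => ?_, fun hh e => ?_⟩
    · change π (h₀⁻¹ (h e)) = π e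
      rw [hh₀' (h e), hh e]
      simp
    · rw [← congrFun hh e, comp_apply, ← hh₀]
      simp
  rw [Nat.card_congr (Equiv.subtypeEquiv (q := fun g : Perm E => π ∘ ⇑g = π)
      (Equiv.mulLeft h₀⁻¹) key), Nat.card_eq_fintype_card, DomMulAct.stabilizer_card]
  simp [← Nat.card_eq_fintype_card, hfib]

theorem card_permutesFibers (hs : 0 < s) (hfib : ∀ i, Nat.card {e // π e = i} = s) :
    Nat.card (permutesFibers π) = (Fintype.card F)! * s ! ^ Fintype.card F := by
  have hπ := surjective_of_card_fiber hs hfib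
  let e : (Σ τ : Perm F, {h : Perm E // Semiconj π h τ}) ≃ permutesFibers π :=
    { toFun := fun p => ⟨p.2, p.1, p.2.2⟩
      invFun := fun h => ⟨h.2.choose, h, h.2.choose_spec⟩
      left_inv := fun p => Sigma.subtype_ext
        (perm_eq_of_semiconj hπ (Exists.choose_spec (p := fun τ : Perm F => Semiconj π p.2 τ)
          ⟨p.1, p.2.2⟩) p.2.2) rfl
      right_inv := fun _ => rfl }
  rw [← Nat.card_congr e, Nat.card_sigma]
  simp [card_semiconj hfib, Fintype.card_perm]

end PermutesFibers

theorem ncard_orbit_conj_mul_card_centralizer {G : Type*} [Group G] (H : Subgroup G) (g : G) :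
    (MulAction.orbit (H.comap (ConjAct.ofConjAct : ConjAct G ≃* G).toMonoidHom) g).ncard *
      Nat.card {h // h ∈ H ∧ Commute h g} = Nat.card H := by
  set K := H.comap (ConjAct.ofConjAct : ConjAct G ≃* G).toMonoidHom
  have hstab : Nat.card (MulAction.stabilizer K g) = Nat.card {h // h ∈ H ∧ Commute h g} :=
    Nat.card_congr
      { toFun := fun x => ⟨ConjAct.ofConjAct x.1.1, x.1.2, mul_inv_eq_iff_eq_mul.1 (by
          have := MulAction.mem_stabilizer_iff.1 x.2
          rwa [Subgroup.smul_def, ConjAct.smul_def] at this)⟩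
        invFun := fun h => ⟨⟨ConjAct.toConjAct h.1, h.2.1⟩, MulAction.mem_stabilizer_iff.2 (by
          rw [Subgroup.smul_def, ConjAct.smul_def, mul_inv_eq_iff_eq_mul]
          exact h.2.2.eq)⟩
        left_inv := fun _ => rfl
        right_inv := fun _ => rfl }
  have hK : Nat.card K = Nat.card H :=
    Nat.card_congr (ConjAct.ofConjAct.toEquiv.subtypeEquiv fun _ => Iff.rfl)
  rw [← hstab, ← hK, ← MulAction.index_stabilizer, mul_comm, Subgroup.card_mul_index]

section CycleCounts

variable {F F' : Type*} [Fintype F] [Fintype F']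

-- The number of cycles of length `d`, fixed points included (unlike `Equiv.Perm.cycleType`).
noncomputable def Equiv.Perm.cycleCounts (σ : Perm F) : ℕ →₀ ℕ :=
  Finsupp.onFinset (Finset.univ.image (minimalPeriod σ))
    (fun d => Nat.card {x // minimalPeriod σ x = d} / d) fun d hd => by
      have : Nat.card {x // minimalPeriod σ x = d} ≠ 0 := fun h => hd (by rw [h, Nat.zero_div])
      obtain ⟨⟨x, rfl⟩⟩ := (Nat.card_ne_zero.1 this).1
      exact Finset.mem_image_of_mem _ (Finset.mem_univ x)

theorem Equiv.Perm.card_minimalPeriod_eq (σ : Perm F) (d : ℕ) :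
    Nat.card {x // minimalPeriod σ x = d} = d * σ.cycleCounts d := by
  rcases Nat.eq_zero_or_pos d with rfl | hd
  · have : IsEmpty {x // minimalPeriod σ x = 0} := ⟨fun x =>
      (minimalPeriod_pos_of_mem_periodicPts (σ.injective.mem_periodicPts x.1)).ne' x.2⟩
    simp
  · have hσ : ∀ x, minimalPeriod σ (σ x) = d ↔ minimalPeriod σ x = d := fun x => by
      rw [minimalPeriod_apply (σ.injective.mem_periodicPts x)]
    have := dvd_card_of_minimalPeriod_eq
      (σ := σ.subtypePerm (p := fun x => minimalPeriod σ x = d) hσ) hd fun x =>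
      (σ.minimalPeriod_subtypePerm hσ x).trans x.2
    rw [cycleCounts, Finsupp.onFinset_apply, Nat.mul_div_cancel' this]

theorem Equiv.Perm.mem_support_cycleCounts_iff {σ : Perm F} {d : ℕ} :
    d ∈ σ.cycleCounts.support ↔ ∃ x, minimalPeriod σ x = d := by
  rw [Finsupp.mem_support_iff]
  constructor
  · intro hd
    have hd0 : d ≠ 0 := by
      rintro rfl
      exact hd (Nat.div_zero _)
    have : Nat.card {x // minimalPeriod σ x = d} ≠ 0 := by
      rw [card_minimalPeriod_eq]
      exact mul_ne_zero hd0 hd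
    obtain ⟨⟨x, hx⟩⟩ := (Nat.card_ne_zero.1 this).1
    exact ⟨x, hx⟩
  · rintro ⟨x, rfl⟩ h
    have := σ.card_minimalPeriod_eq (minimalPeriod σ x)
    rw [h, mul_zero] at this
    exact (Nat.card_ne_zero.2 ⟨⟨⟨x, rfl⟩⟩, inferInstance⟩) this

theorem Equiv.Perm.sum_cycleCounts (σ : Perm F) :
    σ.cycleCounts.sum (fun d k => d * k) = Fintype.card F := by
  classical
  rw [Finsupp.sum_of_support_subset σ.cycleCounts Finsupp.support_onFinset_subset _
      (fun _ _ => rfl), ← Finset.card_univ, Finset.card_eq_sum_card_image (minimalPeriod σ)]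
  refine Finset.sum_congr rfl fun d _ => ?_
  rw [← card_minimalPeriod_eq, Nat.card_eq_fintype_card, Fintype.card_subtype]

theorem Equiv.Perm.cycleCounts_eq_of_semiconj {σ : Perm F} {σ' : Perm F'} (β : F ≃ F')
    (h : Semiconj β σ σ') : σ'.cycleCounts = σ.cycleCounts := by
  ext d
  have hcard : Nat.card {x // minimalPeriod σ' x = d} =
      Nat.card {x // minimalPeriod σ x = d} :=
    Nat.card_congr (β.subtypeEquiv fun x => by
      rw [β.injective.minimalPeriod_eq_of_semiconj h]).symm
  simp only [cycleCounts, Finsupp.onFinset_apply, hcard]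

end CycleCounts

theorem ZMod.card_cast_eq {n d : ℕ} [NeZero n] (h : d ∣ n) (r : ZMod d) :
    Nat.card {z : ZMod n // (ZMod.cast z : ZMod d) = r} = n / d := by
  classical
  have : NeZero d := ⟨fun hd => NeZero.ne n (Nat.eq_zero_of_zero_dvd (hd ▸ h))⟩
  let f := (ZMod.castHom h (ZMod d)).toAddMonoidHom
  have hfib : ∀ r',
      (Finset.univ.filter (f · = r')).card = (Finset.univ.filter (f · = r)).card := fun r' =>
      AddMonoidHom.card_fiber_eq_of_mem_range f (ZMod.castHom_surjective h r')
        (ZMod.castHom_surjective h r)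
  have hsum := Finset.card_eq_sum_card_fiberwise (f := f) (t := Finset.univ) (s := Finset.univ)
    (fun _ _ => Finset.mem_univ _)
  rw [Finset.sum_congr rfl fun r' _ => hfib r', Finset.sum_const, Finset.card_univ,
    Finset.card_univ, ZMod.card, ZMod.card, smul_eq_mul] at hsum
  rw [Nat.card_eq_fintype_card, Fintype.card_subtype, eq_comm,
    Nat.div_eq_of_eq_mul_right (Nat.pos_of_neZero d) hsum]
  rfl

theorem Sigma.card_fiber_map {ι : Type*} {α β : ι → Type*} (g : ∀ i, α i → β i) (i : ι)
    (y : β i) :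
    Nat.card {p : Σ i, α i // (⟨p.1, g p.1 p.2⟩ : Σ i, β i) = ⟨i, y⟩} =
      Nat.card {a : α i // g i a = y} := by
  refine (Nat.card_congr
    (Equiv.ofBijective (fun a => ⟨⟨i, a.1⟩, by rw [a.2]⟩) ⟨?_, ?_⟩)).symm
  · rintro ⟨a, _⟩ ⟨a', _⟩ h
    exact Subtype.ext (eq_of_heq (Sigma.mk.inj_iff.1 (congrArg Subtype.val h)).2)
  · rintro ⟨⟨i', a⟩, h⟩
    obtain ⟨rfl, ha⟩ := Sigma.mk.inj_iff.1 h
    exact ⟨⟨a, eq_of_heq ha⟩, rfl⟩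

theorem Set.ncard_eq_finsum_ncard_inter_preimage {α β : Type*} [Finite α] (s : Set α)
    (f : α → β) : s.ncard = ∑ᶠ b, (s ∩ f ⁻¹' {b}).ncard := by
  classical
  have := Fintype.ofFinite α
  rw [finsum_eq_sum_of_support_subset (s := s.toFinset.image f) _ fun b hb => ?_,
    Set.ncard_eq_toFinset_card', Finset.card_eq_sum_card_image f]
  · refine Finset.sum_congr rfl fun b _ => ?_
    rw [Set.ncard_eq_toFinset_card']
    congr 1
    ext
    simp
  · obtain ⟨a, ha, rfl⟩ := Set.nonempty_of_ncard_ne_zero hb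
    exact Finset.mem_coe.2 (Finset.mem_image_of_mem f (Set.mem_toFinset.2 ha))

section LiftsOfType

variable {E F E' F' : Type*} [Fintype F] [Fintype F']

def liftsOfType (π : E → F) (b : ℕ) (t : ℕ →₀ ℕ) : Set (Perm E) :=
  {y | (∀ e, minimalPeriod y e = b) ∧ ∃ τ : Perm F, Semiconj π y τ ∧ τ.cycleCounts = t}

variable {π : E → F} {π' : E' → F'} {b : ℕ} {t : ℕ →₀ ℕ}

theorem permCongr_mem_liftsOfType (Ψ : E ≃ E') (β : F ≃ F')
    (hΨ : ∀ e, π' (Ψ e) = β (π e)) {y : Perm E} (hy : y ∈ liftsOfType π b t) :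
    Ψ.permCongr y ∈ liftsOfType π' b t := by
  obtain ⟨hper, τ, hτ, ht⟩ := hy
  have hsemi : Semiconj Ψ y (Ψ.permCongr y) := fun e => by simp [Equiv.permCongr_apply]
  have hsemiβ : Semiconj β τ (β.permCongr τ) := fun f => by simp [Equiv.permCongr_apply]
  refine ⟨fun e => ?_, β.permCongr τ, fun e => ?_, ?_⟩
  · rw [← Ψ.apply_symm_apply e, Ψ.injective.minimalPeriod_eq_of_semiconj hsemi, hper]
  · obtain ⟨e, rfl⟩ := Ψ.surjective e
    rw [← hsemi, hΨ, hΨ, hτ, hsemiβ]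
  · rw [Perm.cycleCounts_eq_of_semiconj β hsemiβ, ht]

theorem card_liftsOfType_congr (Ψ : E ≃ E') (β : F ≃ F')
    (hΨ : ∀ e, π' (Ψ e) = β (π e)) :
    Nat.card (liftsOfType π' b t) = Nat.card (liftsOfType π b t) := by
  have hΨ' : ∀ e', π (Ψ.symm e') = β.symm (π' e') := fun e' => by
    rw [β.eq_symm_apply, ← hΨ, Ψ.apply_symm_apply]
  refine (Nat.card_congr (Ψ.permCongr.subtypeEquiv fun y =>
    ⟨permCongr_mem_liftsOfType Ψ β hΨ, fun hy => ?_⟩)).symm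
  simpa [← Equiv.permCongr_symm] using permCongr_mem_liftsOfType Ψ.symm β.symm hΨ' hy

theorem ncard_eq_finsum_card_liftsOfType [Finite E] (hπ : Surjective π) :
    {y : Perm E | (∀ e, minimalPeriod y e = b) ∧ ∃ τ : Perm F, Semiconj π y τ}.ncard =
      ∑ᶠ t, Nat.card (liftsOfType π b t) := by
  classical
  let type : Perm E → ℕ →₀ ℕ := fun y =>
    if h : ∃ τ : Perm F, Semiconj π y τ then h.choose.cycleCounts else 0
  rw [Set.ncard_eq_finsum_ncard_inter_preimage _ type]
  refine finsum_congr fun t => ?_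
  rw [← Nat.card_coe_set_eq,
    show _ ∩ type ⁻¹' {t} = liftsOfType π b t from Set.ext fun y => ?_]
  constructor
  · rintro ⟨⟨hper, hτ⟩, rfl⟩
    exact ⟨hper, hτ.choose, hτ.choose_spec, by simp [type, hτ]⟩
  · rintro ⟨hper, τ, hτ, rfl⟩
    have hex : ∃ τ : Perm F, Semiconj π y τ := ⟨τ, hτ⟩
    refine ⟨⟨hper, hex⟩, ?_⟩
    simp only [Set.mem_preimage, Set.mem_singleton_iff, type, dif_pos hex,
      perm_eq_of_semiconj hπ hex.choose_spec hτ]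

theorem dvd_and_dvd_mul_of_mem_liftsOfType [Fintype E] {s : ℕ} (hs : 0 < s)
    (hfib : ∀ i, Nat.card {e // π e = i} = s) (hb : 0 < b) {y : Perm E}
    (hy : y ∈ liftsOfType π b t) {d : ℕ} (hd : d ∈ t.support) : d ∣ b ∧ b ∣ d * s := by
  obtain ⟨hper, τ, hτ, rfl⟩ := hy
  obtain ⟨f, rfl⟩ := Perm.mem_support_cycleCounts_iff.1 hd
  obtain ⟨e, rfl⟩ := surjective_of_card_fiber hs hfib f
  refine ⟨IsPeriodicPt.minimalPeriod_dvd ?_, ?_⟩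
  · rw [IsPeriodicPt, IsFixedPt, ← (hτ.iterate_right b) e, ← hper e, iterate_minimalPeriod]
  let P : E → Prop := fun e' => τ.SameCycle (π e) (π e')
  have hP : ∀ e', P (y e') ↔ P e' := fun e' => by
    simp only [P, hτ e']
    exact Perm.sameCycle_apply_right
  have hcard : Nat.card {e' // P e'} = minimalPeriod τ (π e) * s := by
    rw [card_eq_mul_of_card_fiber (π := fun e' : {e' // P e'} =>
      (⟨π e', e'.2⟩ : {f // τ.SameCycle (π e) f})) fun i => ?_, ← ncard_permOrbit_s5]
    · rfl
    rw [← hfib i]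
    exact Nat.card_congr ((Equiv.subtypeEquivRight fun _ => Subtype.ext_iff).trans
      (Equiv.subtypeSubtypeEquivSubtype (q := fun e' => π e' = i) fun h => by
        simpa [P, h] using i.2))
  exact hcard ▸ Perm.dvd_card_of_minimalPeriod_eq (σ := y.subtypePerm hP) hb
    fun e' => (y.minimalPeriod_subtypePerm hP e').trans (hper e')

end LiftsOfType

-- The model of a permutation with all cycles of length `b` inducing a permutation of type `t`:
-- `baseRot` on `Base t` has `t d` cycles `(d, j)` of length `d`, above each of them lie the `k d`
-- cycles `(d, j, ·, v)` of length `b` of `rot` on `Total b k t`, and `proj` reduces the position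
-- on a cycle modulo `d`.
namespace CycleModel

variable (b : ℕ) (k : ℕ → ℕ) (t : ℕ →₀ ℕ)

abbrev Base : Type := Σ d : t.support, Fin (t d) × ZMod d

abbrev Total : Type := Σ d : t.support, Fin (t d) × (ZMod b × Fin (k d))

variable {b k t}

def proj : Total b k t → Base t := fun p => ⟨p.1, p.2.1, ZMod.cast p.2.2.1⟩

def rot : Perm (Total b k t) :=
  sigmaCongrRight fun _ => prodCongr (Equiv.refl _) (prodCongr (Equiv.addRight 1) (Equiv.refl _))

def baseRot : Perm (Base t) :=
  sigmaCongrRight fun _ => prodCongr (Equiv.refl _) (Equiv.addRight 1)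

theorem rot_apply (d : t.support) (j : Fin (t d)) (z : ZMod b) (v : Fin (k d)) :
    rot ⟨d, j, z, v⟩ = ⟨d, j, z + 1, v⟩ :=
  rfl

theorem semiconj_rot (d : t.support) (j : Fin (t d)) (v : Fin (k d)) :
    Semiconj (fun z : ZMod b => (⟨d, j, z, v⟩ : Total b k t)) (· + 1) rot :=
  fun _ => rfl

theorem semiconj_baseRot (d : t.support) (j : Fin (t d)) :
    Semiconj (fun x : ZMod d => (⟨d, j, x⟩ : Base t)) (· + 1) baseRot :=
  fun _ => rfl

theorem rot_iterate (d : t.support) (j : Fin (t d)) (z : ZMod b) (v : Fin (k d)) (n : ℕ) :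
    rot^[n] (⟨d, j, z, v⟩ : Total b k t) = ⟨d, j, z + n, v⟩ := by
  rw [← ((semiconj_rot d j v).iterate_right n) z, add_right_iterate, nsmul_one]

theorem baseRot_iterate (d : t.support) (j : Fin (t d)) (x : ZMod d) (n : ℕ) :
    baseRot^[n] (⟨d, j, x⟩ : Base t) = ⟨d, j, x + n⟩ := by
  rw [← ((semiconj_baseRot d j).iterate_right n) x, add_right_iterate, nsmul_one]

theorem minimalPeriod_rot (p : Total b k t) : minimalPeriod rot p = b := by
  obtain ⟨d, j, z, v⟩ := p
  have hinj : Injective (fun z : ZMod b => (⟨d, j, z, v⟩ : Total b k t)) := fun z z' h => by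
    simpa using h
  rw [hinj.minimalPeriod_eq_of_semiconj (semiconj_rot d j v), minimalPeriod_add_right_one]

theorem minimalPeriod_baseRot (p : Base t) : minimalPeriod baseRot p = p.1 := by
  obtain ⟨d, j, x⟩ := p
  have hinj : Injective (fun x : ZMod d => (⟨d, j, x⟩ : Base t)) := fun x x' h => by
    simpa using h
  rw [hinj.minimalPeriod_eq_of_semiconj (semiconj_baseRot d j), minimalPeriod_add_right_one]

theorem proj_rot (hdvd : ∀ d ∈ t.support, d ∣ b) :
    Semiconj (proj : Total b k t → Base t) rot baseRot := by
  rintro ⟨d, j, z, v⟩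
  show (⟨d, j, ZMod.cast (z + 1)⟩ : Base t) = ⟨d, j, ZMod.cast z + 1⟩
  rw [ZMod.cast_add (hdvd d d.2), ZMod.cast_one (hdvd d d.2)]

theorem proj_surjective (hdvd : ∀ d ∈ t.support, d ∣ b) (hk : ∀ d ∈ t.support, 0 < k d) :
    Surjective (proj : Total b k t → Base t) := by
  rintro ⟨d, j, r⟩
  obtain ⟨z, hz⟩ := ZMod.castHom_surjective (hdvd d d.2) r
  exact ⟨⟨d, j, z, ⟨0, hk d d.2⟩⟩, by rw [← hz]; rfl⟩

theorem card_fiber_proj [NeZero b] (hdvd : ∀ d ∈ t.support, d ∣ b) (i : Base t) :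
    Nat.card {p : Total b k t // proj p = i} = b / i.1 * k i.1 := by
  obtain ⟨d, j, r⟩ := i
  let e : {q : Fin (t d) × (ZMod b × Fin (k d)) // (q.1, ZMod.cast q.2.1) = (j, r)} ≃
      {z : ZMod b // (ZMod.cast z : ZMod d) = r} × Fin (k d) :=
    { toFun := fun q => (⟨q.1.2.1, (Prod.ext_iff.1 q.2).2⟩, q.1.2.2)
      invFun := fun zv => ⟨(j, zv.1.1, zv.2), Prod.ext rfl zv.1.2⟩
      left_inv := fun q => Subtype.ext (Prod.ext (Prod.ext_iff.1 q.2).1.symm rfl)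
      right_inv := fun _ => rfl }
  have hk : Nat.card (Fin (k d)) = k d := by simp
  change _ = b / d * k d
  rw [← ZMod.card_cast_eq (hdvd d d.2) r, ← hk, ← Nat.card_prod, ← Nat.card_congr e]
  exact Sigma.card_fiber_map (fun (d : t.support) (q : Fin (t d) × (ZMod b × Fin (k d))) =>
    (q.1, (ZMod.cast q.2.1 : ZMod d))) d (j, r)

variable (b) in
abbrev ConstResidue (d n : ℕ) : Type :=
  {a : Fin n → ZMod b // ∀ v w, (ZMod.cast (a v) : ZMod d) = ZMod.cast (a w)}

theorem card_constResidue [NeZero b] {d n : ℕ} (hdb : d ∣ b) (hn : 0 < n) :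
    Nat.card (ConstResidue b d n) = d * (b / d) ^ n := by
  have : NeZero d := ⟨fun hd => NeZero.ne b (Nat.eq_zero_of_zero_dvd (hd ▸ hdb))⟩
  let g : ConstResidue b d n → ZMod d := fun a => ZMod.cast (a.1 ⟨0, hn⟩)
  have hfiber : ∀ r, {a // g a = r} ≃ (Fin n → {z : ZMod b // (ZMod.cast z : ZMod d) = r}) :=
    fun r =>
    { toFun := fun a v => ⟨a.1.1 v, (a.1.2 v _).trans a.2⟩
      invFun := fun f =>
        ⟨⟨fun v => (f v).1, fun v w => (f v).2.trans (f w).2.symm⟩, (f _).2⟩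
      left_inv := fun _ => rfl
      right_inv := fun _ => rfl }
  have hr : ∀ r, Nat.card {a // g a = r} = (b / d) ^ n := fun r => by
    rw [Nat.card_congr (hfiber r), Nat.card_fun, ZMod.card_cast_eq hdb,
      Nat.card_eq_fintype_card, Fintype.card_fin]
  rw [← Nat.card_congr (Equiv.sigmaFiberEquiv g), Nat.card_sigma]
  simp only [hr, Finset.sum_const, Finset.card_univ, ZMod.card, smul_eq_mul]

-- The block-preserving permutations commuting with `rot` (`exists_centralizerOf_eq`): permute
-- the cycles of `baseRot` of each length `d`, and above each of them permute the cycles of `rot`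
-- and rotate them by amounts all congruent modulo `d`.
variable (b k t) in
abbrev CentralizerData (d : t.support) : Type :=
  Perm (Fin (t d)) × (Fin (t d) → ConstResidue b d (k d) × Perm (Fin (k d)))

def centralizerOf (D : ∀ d, CentralizerData b k t d) : Perm (Total b k t) :=
  sigmaCongrRight fun d => prodShear (D d).1 fun j =>
    (prodComm _ _).trans
      ((prodShear ((D d).2 j).2 fun v => Equiv.addLeft (((D d).2 j).1.1 v)).trans (prodComm _ _))

theorem centralizerOf_apply (D : ∀ d, CentralizerData b k t d) (d : t.support) (j : Fin (t d))
    (z : ZMod b) (v : Fin (k d)) :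
    centralizerOf D ⟨d, j, z, v⟩ = ⟨d, (D d).1 j, ((D d).2 j).1.1 v + z, ((D d).2 j).2 v⟩ :=
  rfl

theorem centralizerOf_injective (hk : ∀ d ∈ t.support, 0 < k d) :
    Injective (centralizerOf : (∀ d, CentralizerData b k t d) → Perm (Total b k t)) := by
  intro D D' h
  have hpt : ∀ d j v, ((D d).1 j, ((D d).2 j).1.1 v, ((D d).2 j).2 v) =
      ((D' d).1 j, ((D' d).2 j).1.1 v, ((D' d).2 j).2 v) := fun d j v => by
    have := congrArg (· ⟨d, j, 0, v⟩) h
    simp only [centralizerOf_apply, add_zero, Sigma.mk.inj_iff, heq_eq_eq, true_and] at this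
    simpa using this
  funext d
  refine Prod.ext (Equiv.ext fun j => (Prod.ext_iff.1 (hpt d j ⟨0, hk d d.2⟩)).1)
    (funext fun j => Prod.ext (Subtype.ext (funext fun v => ?_)) (Equiv.ext fun v => ?_))
  · exact (Prod.ext_iff.1 (Prod.ext_iff.1 (hpt d j v)).2).1
  · exact (Prod.ext_iff.1 (Prod.ext_iff.1 (hpt d j v)).2).2

theorem fst_apply_of_commute (hdvd : ∀ d ∈ t.support, d ∣ b)
    (hk : ∀ d ∈ t.support, 0 < k d) {h : Perm (Total b k t)} (hh : h ∈ permutesFibers proj)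
    (hc : Commute h rot) (p : Total b k t) : (h p).1 = p.1 := by
  obtain ⟨τ, hτ⟩ := hh
  -- `τ` commutes with `baseRot`, hence preserves the lengths `d` of its cycles.
  have hτc : Semiconj τ baseRot baseRot := fun x => by
    obtain ⟨p, rfl⟩ := proj_surjective hdvd hk x
    rw [← proj_rot hdvd, ← hτ, ← hτ, ← proj_rot hdvd, ← Perm.mul_apply, hc.eq,
      Perm.mul_apply]
  have := τ.injective.minimalPeriod_eq_of_semiconj hτc (proj p)
  rw [minimalPeriod_baseRot, minimalPeriod_baseRot, ← hτ] at this
  exact Subtype.ext this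

theorem exists_apply_eq_of_commute [NeZero b] (hdvd : ∀ d ∈ t.support, d ∣ b)
    (hk : ∀ d ∈ t.support, 0 < k d) {h : Perm (Total b k t)} (hh : h ∈ permutesFibers proj)
    (hc : Commute h rot) (d : t.support) (j : Fin (t d)) (v : Fin (k d)) :
    ∃ j' z' v', ∀ z, h ⟨d, j, z, v⟩ = ⟨d, j', z' + z, v'⟩ := by
  rcases hq : h ⟨d, j, 0, v⟩ with ⟨d', j', z', v'⟩
  obtain rfl : d = d' := by
    simpa [hq] using (fst_apply_of_commute hdvd hk hh hc ⟨d, j, 0, v⟩).symm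
  refine ⟨j', z', v', fun z => ?_⟩
  have hz : (⟨d, j, z, v⟩ : Total b k t) = (rot ^ z.val) ⟨d, j, 0, v⟩ := by
    rw [Perm.coe_pow, rot_iterate, zero_add, ZMod.natCast_zmod_val]
  rw [hz, ← Perm.mul_apply, (hc.pow_right _).eq, Perm.mul_apply, hq, Perm.coe_pow, rot_iterate,
    ZMod.natCast_zmod_val]

theorem exists_centralizerOf_eq [NeZero b] (hdvd : ∀ d ∈ t.support, d ∣ b)
    (hk : ∀ d ∈ t.support, 0 < k d) {h : Perm (Total b k t)} (hh : h ∈ permutesFibers proj)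
    (hc : Commute h rot) : ∃ D, centralizerOf D = h := by
  choose j₂ z₂ v₂ hform using exists_apply_eq_of_commute hdvd hk hh hc
  -- Preserving the blocks, `h` moves all cycles above `(d, j)` to cycles above one `(d, j₂)`,
  -- with shifts `z₂` that agree modulo `d`.
  have hproj : ∀ d j v v', j₂ d j v = j₂ d j v' ∧
      (ZMod.cast (z₂ d j v) : ZMod d) = ZMod.cast (z₂ d j v') := fun d j v v' => by
    obtain ⟨τ, hτ⟩ := hh
    have := (hτ ⟨d, j, 0, v⟩).trans (hτ ⟨d, j, 0, v'⟩).symm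
    rw [hform, hform, add_zero, add_zero] at this
    exact Prod.ext_iff.1 (eq_of_heq (Sigma.mk.inj_iff.1 this).2)
  have hv₂ : ∀ d j, Injective (v₂ d j) := fun d j v v' hv => by
    have : h ⟨d, j, z₂ d j v' - z₂ d j v, v⟩ = h ⟨d, j, 0, v'⟩ := by
      rw [hform, hform, (hproj d j v v').1, hv, add_sub_cancel, add_zero]
    exact (by simpa using h.injective this : _ ∧ v = v').2
  have hσ : ∀ d, Injective fun j => j₂ d j ⟨0, hk d d.2⟩ := fun d j j' hj => by
    set v₀ : Fin (k d) := ⟨0, hk d d.2⟩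
    obtain ⟨v', hv'⟩ := Finite.injective_iff_surjective.1 (hv₂ d j') (v₂ d j v₀)
    have : h ⟨d, j', z₂ d j v₀ - z₂ d j' v', v'⟩ = h ⟨d, j, 0, v₀⟩ := by
      rw [hform, hform, (hproj d j' v' v₀).1, ← show j₂ d j v₀ = j₂ d j' v₀ from hj,
        hv', add_sub_cancel, add_zero]
    exact (by simpa using h.injective this : j' = j ∧ _).1.symm
  refine ⟨fun d => (Equiv.ofBijective _ (Finite.injective_iff_bijective.1 (hσ d)), fun j =>
    (⟨z₂ d j, fun v w => (hproj d j v w).2⟩,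
      Equiv.ofBijective _ (Finite.injective_iff_bijective.1 (hv₂ d j)))), Equiv.ext ?_⟩
  rintro ⟨d, j, z, v⟩
  rw [centralizerOf_apply, hform, ← (hproj d j _ v).1]
  rfl

section

variable [∀ d : t.support, NeZero (d : ℕ)]

theorem card_base : Nat.card (Base t) = t.sum fun d n => d * n := by
  rw [Nat.card_sigma, Finsupp.sum, ← Finset.sum_coe_sort t.support]
  simp [mul_comm]

theorem cycleCounts_baseRot : (baseRot (t := t)).cycleCounts = t := by
  ext d
  have hcard : Nat.card {p : Base t // minimalPeriod baseRot p = d} =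
      Nat.card {p : Base t // (p.1 : ℕ) = d} := by simp only [minimalPeriod_baseRot]
  rw [Perm.cycleCounts, Finsupp.onFinset_apply, hcard]
  by_cases hd : d ∈ t.support
  · have : NeZero d := inferInstanceAs (NeZero ((⟨d, hd⟩ : t.support) : ℕ))
    rw [Nat.card_congr ((Equiv.subtypeEquivRight fun p => by rw [Subtype.ext_iff]).trans
      (Equiv.sigmaSubtype (⟨d, hd⟩ : t.support))), Nat.card_prod, Nat.card_zmod,
      Nat.card_eq_fintype_card, Fintype.card_fin, Nat.mul_div_cancel _ (Nat.pos_of_neZero d)]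
  · have : IsEmpty {p : Base t // (p.1 : ℕ) = d} := ⟨fun p => hd (p.2 ▸ p.1.1.2)⟩
    rw [Nat.card_of_isEmpty, Nat.zero_div, Finsupp.notMem_support_iff.1 hd]

theorem rot_mem_liftsOfType (hdvd : ∀ d ∈ t.support, d ∣ b) :
    rot ∈ liftsOfType (proj : Total b k t → Base t) b t :=
  ⟨minimalPeriod_rot, baseRot, proj_rot hdvd, cycleCounts_baseRot⟩

variable {E F : Type*}

theorem exists_equiv_base [Fintype F] {τ : Perm F} (ht : τ.cycleCounts = t) :
    ∃ β : Base t ≃ F, Semiconj β baseRot τ := by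
  have hρ : ∀ d : t.support, ∃ ρ : ZMod d × Fin (t d) ≃ {f // minimalPeriod τ f = d},
      ∀ u v, (τ (ρ (u, v)) : F) = ρ (u + 1, v) := fun d => by
    have hτ : ∀ f, minimalPeriod τ (τ f) = d ↔ minimalPeriod τ f = d := fun f => by
      rw [minimalPeriod_apply (τ.injective.mem_periodicPts f)]
    obtain ⟨ρ, hρ⟩ := Perm.exists_equiv_zmod_prod_fin
      (σ := τ.subtypePerm (p := fun f => minimalPeriod τ f = d) hτ)
      (fun f => (τ.minimalPeriod_subtypePerm hτ f).trans f.2)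
      (by rw [τ.card_minimalPeriod_eq, ht])
    exact ⟨ρ, fun u v => congrArg Subtype.val (hρ u v)⟩
  choose ρ hρ using hρ
  refine ⟨(sigmaCongrRight fun d => (prodComm _ _).trans (ρ d)).trans
    (sigmaSubtypeFiberEquiv (minimalPeriod τ) (· ∈ t.support)
      fun f => ht ▸ Perm.mem_support_cycleCounts_iff.2 ⟨f, rfl⟩), ?_⟩
  rintro ⟨d, j, x⟩
  exact (hρ d x j).symm

theorem exists_equiv_total [Fintype E] [Fintype F] {π : E → F} {s : ℕ}
    (hfib : ∀ i, Nat.card {e // π e = i} = s) [NeZero b] (hdvd : ∀ d ∈ t.support, d ∣ b)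
    (hk : ∀ d ∈ t.support, b / d * k d = s) {y : Perm E} (hy : ∀ e, minimalPeriod y e = b)
    {τ : Perm F} (hτ : Semiconj π y τ) (ht : τ.cycleCounts = t) :
    ∃ (Ψ : Total b k t ≃ E) (β : Base t ≃ F),
      Semiconj Ψ rot y ∧ ∀ p, π (Ψ p) = β (proj p) := by
  obtain ⟨β, hβ⟩ := exists_equiv_base ht
  have hper : ∀ d j, minimalPeriod τ (β ⟨d, j, 0⟩) = d := fun d j => by
    rw [β.injective.minimalPeriod_eq_of_semiconj hβ, minimalPeriod_baseRot]
  choose ρ hρ using fun (d : t.support) (j : Fin (t d)) =>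
    exists_equiv_zmod_prod_fiber hτ (Nat.pos_of_neZero b) (hdvd d d.2) hy (hper d j)
      ((hfib _).trans (hk d d.2).symm)
  -- `Ψ (d, j, z, v)` is `y^z` applied to the `v`-th base point of the fibre over `β (d, j, 0)`.
  let Ψ : Total b k t → E := fun p => y^[p.2.2.1.val] (ρ p.1 p.2.1 (0, p.2.2.2))
  have hπΨ : ∀ p, π (Ψ p) = β (proj p) := by
    rintro ⟨d, j, z, v⟩
    rw [(hτ.iterate_right _) _, (ρ d j (0, v)).2, ← (hβ.iterate_right _) _, baseRot_iterate,
      zero_add, ← ZMod.cast_eq_val]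
    rfl
  have hinj : Injective Ψ := by
    rintro ⟨d, j, z, v⟩ ⟨d', j', z', v'⟩ h
    have hproj := β.injective ((hπΨ _).symm.trans ((congrArg π h).trans (hπΨ _)))
    obtain ⟨rfl, hjx⟩ := Sigma.mk.inj_iff.1 hproj
    obtain ⟨rfl, hx⟩ := Prod.ext_iff.1 (eq_of_heq hjx)
    have hmod : z.val ≡ z'.val [MOD d] := by
      rwa [ZMod.cast_eq_val, ZMod.cast_eq_val, ZMod.natCast_eq_natCast_iff] at hx
    have hb : b = d * (b / d) := (Nat.mul_div_cancel' (hdvd d d.2)).symm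
    obtain ⟨hz, rfl⟩ := eq_of_iterate_apply_eq_of_modEq y.injective
      (g := fun uv => (ρ d j uv : E)) (Subtype.val_injective.comp (ρ d j).injective) (hρ d j)
      (hb ▸ z.val_lt) (hb ▸ z'.val_lt) hmod h
    rw [ZMod.val_injective b hz]
  have hcard : Nat.card (Total b k t) = Nat.card E := by
    rw [card_eq_mul_of_card_fiber (π := proj)
      (fun i => (card_fiber_proj hdvd i).trans (hk _ i.1.2)), card_eq_mul_of_card_fiber hfib,
      Nat.card_congr β]
  refine ⟨Equiv.ofBijective Ψ ((Nat.bijective_iff_injective_and_card Ψ).2 ⟨hinj, hcard⟩),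
    β, ?_, hπΨ⟩
  rintro ⟨d, j, z, v⟩
  show y^[(z + 1).val] _ = y (y^[z.val] _)
  rw [← iterate_succ_apply' y]
  exact iterate_eq_iterate_of_natCast_eq (hy _) (by simp)

theorem centralizerOf_mem (hdvd : ∀ d ∈ t.support, d ∣ b) (hk : ∀ d ∈ t.support, 0 < k d)
    (D : ∀ d, CentralizerData b k t d) :
    centralizerOf D ∈ permutesFibers proj ∧ Commute (centralizerOf D) rot := by
  refine ⟨exists_semiconj_of_respects (proj_surjective hdvd hk) ?_, Equiv.ext ?_⟩
  · rintro ⟨d, j, z, v⟩ ⟨d', j', z', v'⟩ h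
    change (⟨d, j, ZMod.cast z⟩ : Base t) = ⟨d', j', ZMod.cast z'⟩ at h
    obtain ⟨rfl, h⟩ := Sigma.mk.inj_iff.1 h
    obtain ⟨rfl, h⟩ := Prod.ext_iff.1 (eq_of_heq h)
    change (⟨d, (D d).1 j, ZMod.cast (((D d).2 j).1.1 v + z)⟩ : Base t) =
      ⟨d, (D d).1 j, ZMod.cast (((D d).2 j).1.1 v' + z')⟩
    have h : (ZMod.cast z : ZMod d) = ZMod.cast z' := h
    rw [ZMod.cast_add (hdvd d d.2), ZMod.cast_add (hdvd d d.2), ((D d).2 j).1.2 v v', h]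
  · rintro ⟨d, j, z, v⟩
    simp only [Perm.mul_apply, rot_apply, centralizerOf_apply, add_assoc]

theorem card_centralizer [NeZero b] (hdvd : ∀ d ∈ t.support, d ∣ b)
    (hk : ∀ d ∈ t.support, 0 < k d) :
    Nat.card {h : Perm (Total b k t) // h ∈ permutesFibers proj ∧ Commute h rot} =
      ∏ d ∈ t.support, (t d)! * (d * (b / d) ^ k d * (k d)!) ^ t d := by
  have hbij : Bijective fun D : ∀ d, CentralizerData b k t d =>
      (⟨centralizerOf D, centralizerOf_mem hdvd hk D⟩ :
        {h : Perm (Total b k t) // h ∈ permutesFibers proj ∧ Commute h rot}) :=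
    ⟨fun D D' h => centralizerOf_injective hk (congrArg Subtype.val h),
      fun h => (exists_centralizerOf_eq hdvd hk h.2.1 h.2.2).imp fun _ hD => Subtype.ext hD⟩
  rw [← Nat.card_congr (Equiv.ofBijective _ hbij), Nat.card_pi,
    ← Finset.prod_coe_sort t.support]
  refine Finset.prod_congr rfl fun d _ => ?_
  rw [Nat.card_prod, Nat.card_fun, Nat.card_prod, card_constResidue (hdvd d d.2) (hk d d.2)]
  simp [Fintype.card_perm]

-- By `exists_equiv_total`, the orbit of `rot` under conjugation by the block-preserving
-- permutations is all of `liftsOfType proj b t`.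
theorem card_liftsOfType_mul_card_centralizer [NeZero b] {s : ℕ}
    (hdvd : ∀ d ∈ t.support, d ∣ b) (hk : ∀ d ∈ t.support, b / d * k d = s) :
    Nat.card (liftsOfType (proj : Total b k t → Base t) b t) *
      Nat.card {h : Perm (Total b k t) // h ∈ permutesFibers proj ∧ Commute h rot} =
      Nat.card (permutesFibers (proj : Total b k t → Base t)) := by
  have hconj : ∀ (h : Perm (Total b k t)) y, ConjAct.toConjAct h • y = h.permCongr y :=
    fun h y => Equiv.ext fun _ => by simp [ConjAct.smul_def]
  rw [← ncard_orbit_conj_mul_card_centralizer, ← Nat.card_coe_set_eq]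
  congr 3
  ext y
  constructor
  · rintro ⟨hy, τ, hτ, ht⟩
    obtain ⟨Ψ, β, hΨ, hβ⟩ := exists_equiv_total (fun i => (card_fiber_proj hdvd i).trans
      (hk _ i.1.2)) hdvd hk hy hτ ht
    refine ⟨⟨ConjAct.toConjAct (Ψ : Perm (Total b k t)), β, hβ⟩, ?_⟩
    change ConjAct.toConjAct (Ψ : Perm (Total b k t)) • rot = y
    rw [hconj]
    refine Equiv.ext fun e => ?_
    obtain ⟨e, rfl⟩ := Ψ.surjective e
    simp [hΨ e]
  · rintro ⟨⟨g, τ, hτ⟩, rfl⟩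
    change g • rot ∈ _
    rw [← ConjAct.toConjAct_ofConjAct g, hconj]
    exact permCongr_mem_liftsOfType _ τ hτ (rot_mem_liftsOfType hdvd)

end

end CycleModel

open CycleModel in
theorem card_liftsOfType_mul_prod {E F : Type*} [Fintype E] [Fintype F] {π : E → F} {s : ℕ}
    (hs : 0 < s) (hfib : ∀ i, Nat.card {e // π e = i} = s) {b : ℕ} [NeZero b] {k : ℕ → ℕ}
    {t : ℕ →₀ ℕ} (hdvd : ∀ d ∈ t.support, d ∣ b)
    (hk : ∀ d ∈ t.support, b / d * k d = s)
    (ht : (t.sum fun d n => d * n) = Fintype.card F) :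
    Nat.card (liftsOfType π b t) *
        ∏ d ∈ t.support, (t d)! * (d * (b / d) ^ k d * (k d)!) ^ t d =
      (Fintype.card F)! * s ! ^ Fintype.card F := by
  have : ∀ d : t.support, NeZero (d : ℕ) := fun d =>
    ⟨fun h => NeZero.ne b (Nat.eq_zero_of_zero_dvd (h ▸ hdvd d d.2))⟩
  have hfib' : ∀ i : Base t, Nat.card {p : Total b k t // proj p = i} = s := fun i =>
    (card_fiber_proj hdvd i).trans (hk _ i.1.2)
  have hkpos : ∀ d ∈ t.support, 0 < k d := fun d hd =>
    Nat.pos_of_mul_pos_left ((hk d hd).symm ▸ hs)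
  obtain ⟨β⟩ : Nonempty (Base t ≃ F) := by
    rw [← Fintype.card_eq, ← Nat.card_eq_fintype_card, card_base, ht]
  obtain ⟨Ψ, hΨ⟩ := exists_equiv_of_card_fiber hfib' hfib β
  rw [card_liftsOfType_congr Ψ β hΨ, ← card_centralizer hdvd hkpos,
    card_liftsOfType_mul_card_centralizer hdvd hk, card_permutesFibers hs hfib',
    Fintype.card_congr β]

theorem sum_div_mul_eq {t : ℕ →₀ ℕ} {m q : ℕ} (hm : 0 < m)
    (hsum : (t.sum fun d n => d * n) = m) (hdvd : ∀ d ∈ t.support, m ∣ d * q) :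
    ∑ d ∈ t.support, d * q / m * t d = q := by
  apply Nat.eq_of_mul_eq_mul_left hm
  rw [Finset.mul_sum, Finset.sum_congr rfl fun d hd => by
    rw [← mul_assoc, Nat.mul_div_cancel' (hdvd d hd)]]
  simp only [mul_right_comm _ q, ← Finset.sum_mul]
  rw [← Finsupp.sum, hsum, mul_comm]

theorem prod_mul_cast_prod_eq_pow {t : ℕ →₀ ℕ} {b q m : ℕ} (hb : 0 < b) (hm : 0 < m)
    (hsum : (t.sum fun d n => d * n) = m) (hsupp : ∀ d ∈ t.support, d ∣ b ∧ m ∣ d * q) :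
    (∏ d ∈ t.support,
      1 / ((d : ℚ) ^ t d * (t d)!) * ((d : ℚ) ^ (d * q / m) / (d * q / m)!) ^ t d) *
      ((∏ d ∈ t.support, (t d)! * (d * (b / d) ^ (d * q / m) * (d * q / m)!) ^ t d : ℕ) :
        ℚ) =
      (b : ℚ) ^ q := by
  have key : ∀ d c n k : ℕ, d ≠ 0 → 1 / ((d : ℚ) ^ n * n !) * ((d : ℚ) ^ k / k !) ^ n *
      ((n ! * (d * c ^ k * k !) ^ n : ℕ) : ℚ) = ((d * c : ℕ) : ℚ) ^ (k * n) :=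
    fun d c n k hd => by
    have : (d : ℚ) ≠ 0 := by exact_mod_cast hd
    push_cast
    rw [div_pow, mul_pow, mul_pow, mul_pow, ← pow_mul, ← pow_mul]
    field_simp
  rw [Nat.cast_prod, ← Finset.prod_mul_distrib, Finset.prod_congr rfl fun d hd => by
    rw [key _ _ _ _ (Nat.pos_of_dvd_of_pos (hsupp d hd).1 hb).ne',
      Nat.mul_div_cancel' (hsupp d hd).1]]
  rw [Finset.prod_pow_eq_pow_sum, sum_div_mul_eq hm hsum fun d hd => (hsupp d hd).2]

theorem div_mul_div_eq_of_mul_eq {b q m s d : ℕ} (hb : 0 < b) (hm : 0 < m)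
    (hmsbq : m * s = b * q) (hdb : d ∣ b) (hmd : m ∣ d * q) : b / d * (d * q / m) = s := by
  obtain ⟨c, rfl⟩ := hdb
  obtain ⟨w, hw⟩ := hmd
  have hd : 0 < d := Nat.pos_of_mul_pos_right hb
  rw [hw, Nat.mul_div_cancel_left _ hd, Nat.mul_div_cancel_left _ hm]
  apply Nat.eq_of_mul_eq_mul_left hm
  rw [hmsbq]
  linear_combination c * hw.symm

theorem dvd_mul_iff_dvd_mul_of_mul_eq {b q m s : ℕ} (hb : 0 < b) (hm : 0 < m)
    (hmsbq : m * s = b * q) (d : ℕ) : b ∣ d * s ↔ m ∣ d * q :=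
  calc b ∣ d * s ↔ b * m ∣ d * s * m := (Nat.mul_dvd_mul_iff_right hm).symm
    _ ↔ b * m ∣ b * (d * q) := by rw [mul_assoc, mul_comm s, hmsbq, mul_left_comm]
    _ ↔ m ∣ d * q := Nat.mul_dvd_mul_iff_left hb

theorem cast_card_liftsOfType {E F : Type*} [Fintype E] [Fintype F] {π : E → F}
    {b q m s : ℕ} (hb : 0 < b) (hm : 0 < m) (hs : 0 < s)
    (hcard : Fintype.card F = m) (hfib : ∀ i, Nat.card {e // π e = i} = s)
    (hmsbq : m * s = b * q) (t : ℕ →₀ ℕ) :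
    (Nat.card (liftsOfType π b t) : ℚ) = (m ! / (b : ℚ) ^ q) * (s ! : ℚ) ^ m *
      if (t.sum fun d n => d * n) = m ∧ ∀ d ∈ t.support, d ∣ b ∧ m ∣ d * q
      then ∏ d ∈ t.support,
        1 / ((d : ℚ) ^ t d * (t d)!) * ((d : ℚ) ^ (d * q / m) / (d * q / m)!) ^ t d
      else 0 := by
  have : NeZero b := ⟨hb.ne'⟩
  split_ifs with ht
  · obtain ⟨hsum, hsupp⟩ := ht
    have hmain := card_liftsOfType_mul_prod hs hfib (k := fun d => d * q / m)
      (fun d hd => (hsupp d hd).1)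
      (fun d hd => div_mul_div_eq_of_mul_eq hb hm hmsbq (hsupp d hd).1 (hsupp d hd).2)
      (hsum.trans hcard.symm)
    rw [hcard] at hmain
    have hW := prod_mul_cast_prod_eq_pow hb hm hsum hsupp
    have hW0 := right_ne_zero_of_mul
      (hW ▸ pow_ne_zero q (Nat.cast_ne_zero.2 hb.ne') : _ ≠ (0 : ℚ))
    apply mul_right_cancel₀ hW0
    rw [← Nat.cast_mul, hmain, mul_assoc _ (∏ d ∈ t.support, _), hW]
    push_cast
    field_simp
  · rw [mul_zero, Nat.cast_eq_zero, Nat.card_eq_zero]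
    refine Or.inl ⟨fun ⟨y, hy⟩ => ht ⟨?_, fun d hd => ?_⟩⟩
    · obtain ⟨-, τ, -, rfl⟩ := hy
      rw [Perm.sum_cycleCounts, hcard]
    · obtain ⟨hdb, hbd⟩ := dvd_and_dvd_mul_of_mem_liftsOfType hs hfib hb hy hd
      exact ⟨hdb, (dvd_mul_iff_dvd_mul_of_mul_eq hb hm hmsbq d).1 hbd⟩

open Finsupp in
theorem Im_formula_general (b q n m : ℕ) (hb : 0 < b) (hq : 0 < q) (hn : n = b * q)
    (hm : m ∣ n)
    (Im : ℕ)
    (hIm : Im = Set.ncard {y : Equiv.Perm (ZMod n) |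
      allOrbitsSize y b ∧
      ∀ i : ZMod m, ∃ j : ZMod m,
        (⇑y) '' ((ZMod.castHom hm (ZMod m)) ⁻¹' {i}) = (ZMod.castHom hm (ZMod m)) ⁻¹' {j}}) :
    (Im : ℚ) = ((m.factorial : ℚ) / (b : ℚ) ^ q) * (((n / m).factorial : ℚ)) ^ m *
      ∑ᶠ t : ℕ →₀ ℕ,
        if (t.sum (fun d td => d * td) = m ∧ ∀ d ∈ t.support, d ∣ b ∧ m ∣ d * q)
        then ∏ d ∈ t.support,
          (1 / ((d : ℚ) ^ (t d) * ((t d).factorial : ℚ))) *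
            (((d : ℚ) ^ (d * q / m)) / (((d * q / m).factorial : ℚ))) ^ (t d)
        else 0 := by
  have hn0 : 0 < n := hn ▸ Nat.mul_pos hb hq
  have : NeZero n := ⟨hn0.ne'⟩
  have hm0 : 0 < m := Nat.pos_of_dvd_of_pos hm hn0
  have : NeZero m := ⟨hm0.ne'⟩
  set π : ZMod n → ZMod m := ⇑(ZMod.castHom hm (ZMod m))
  have hfib : ∀ i, Nat.card {e // π e = i} = n / m := ZMod.card_cast_eq hm
  have hs : 0 < n / m := Nat.div_pos (Nat.le_of_dvd hn0 hm) hm0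
  have hπ := surjective_of_card_fiber hs hfib
  have hY : {y : Perm (ZMod n) |
        allOrbitsSize y b ∧ ∀ i, ∃ j, y '' (π ⁻¹' {i}) = π ⁻¹' {j}} =
      {y : Perm (ZMod n) | (∀ e, minimalPeriod y e = b) ∧ ∃ τ : Perm (ZMod m),
        Semiconj π y τ} := by
    simp only [allOrbitsSize_iff_s5, forall_image_preimage_iff hπ]
  rw [hIm, hY, ncard_eq_finsum_card_liftsOfType hπ, mul_finsum]
  refine ((Nat.castAddMonoidHom ℚ).map_finsum_of_injective Nat.cast_injective _).trans
    (finsum_congr fun t => ?_)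
  exact cast_card_liftsOfType hb hm0 hs (ZMod.card m) hfib (by rw [Nat.mul_div_cancel' hm, hn]) t

open Finsupp in
/-- Exact formula for the number `I_m` of permutations `y` of cycle type `(b^q)`
preserving the partition of `ZMod n` into residue classes modulo `m`. -/
theorem Im_formula (b q n m : ℕ) (hb : 0 < b) (hq : 0 < q) (hn : n = b * q)
    (hm : m ∣ n) (hm2 : 2 ≤ m) (hmn : m < n)
    (x : Equiv.Perm (ZMod n)) (hx : x = Equiv.addRight (1 : ZMod n))
    (Im : ℕ)
    (hIm : Im = Set.ncard {y : Equiv.Perm (ZMod n) |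
      allOrbitsSize y b ∧
      ∀ i : ZMod m, ∃ j : ZMod m,
        (⇑y) '' ((ZMod.castHom hm (ZMod m)) ⁻¹' {i}) = (ZMod.castHom hm (ZMod m)) ⁻¹' {j}}) :
    (Im : ℚ) = ((m.factorial : ℚ) / (b : ℚ) ^ q) * (((n / m).factorial : ℚ)) ^ m *
      ∑ᶠ t : ℕ →₀ ℕ,
        if (t.sum (fun d td => d * td) = m ∧ ∀ d ∈ t.support, d ∣ b ∧ m ∣ d * q)
        then ∏ d ∈ t.support,
          (1 / ((d : ℚ) ^ (t d) * ((t d).factorial : ℚ))) *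
            (((d : ℚ) ^ (d * q / m)) / (((d * q / m).factorial : ℚ))) ^ (t d)
        else 0 :=
  Im_formula_general b q n m hb hq hn hm Im hIm
end

section
/- Let n be a positive integer and let x be the permutation of ZMod n given by k ↦ k + 1. (a) If G is a subgroup of Equiv.Perm (ZMod n) containing x, and B ⊆ ZMod n is a block for the natural action of G that is nontrivial (B is nonempty, B is not a singleton, and B ≠ ZMod n), then there exist a divisor m of n with 2 ≤ m < n and an element j of ZMod n such that B = { j + k·(m : ZMod n) : k ∈ ℤ }, i.e. B is a coset of the additive subgroup of ZMod n generated by the image of m. (b) Conversely, for every divisor m of n with 2 ≤ m < n and every j ∈ ZMod n, the set { j + k·(m : ZMod n) : k ∈ ℤ } is a nontrivial block for the cyclic subgroup of Equiv.Perm (ZMod n) generated by x. -/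
/-!
The translations of `ZMod n` all lie in the cyclic group generated by `x`, so a block `B` of
any `G ∋ x` is a block of `ZMod n` acting on itself. Such a block through `j` is the orbit of
`j` under its setwise stabilizer `S`, and every subgroup `S` of the cyclic group `ZMod n` is
generated by the image of its index `m`, a divisor of `n`; thus `B = j + mℤ`. Nontriviality of
`B` rules out `m = 1` and `m = n`. Conversely, cosets of a subgroup of an abelian group are
blocks, being the orbits of a normal subgroup.
-/

open AddAction Pointwise

/-- The "residue class modulo `m`" through `j` in `ZMod n`: the coset
`{ j + k·m : k ∈ ℤ }` of the additive subgroup generated by (the image of) `m`. -/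
def residueClass (n m : ℕ) (j : ZMod n) : Set (ZMod n) :=
  {z | ∃ k : ℤ, z = j + k • (m : ZMod n)}

lemma Equiv.image_addRight_eq_vadd {G : Type*} [AddCommGroup G] (c : G) (B : Set G) :
    ⇑(Equiv.addRight c) '' B = c +ᵥ B := by
  rw [← Set.image_vadd]
  exact congrArg (· '' B) (funext fun z => add_comm z c)

lemma AddAction.isBlock_iff_image_addRight {G : Type*} [AddCommGroup G] {B : Set G} :
    IsBlock G B ↔ ∀ c : G,
      ⇑(Equiv.addRight c) '' B = B ∨ Disjoint (⇑(Equiv.addRight c) '' B) B := by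
  simp_rw [Equiv.image_addRight_eq_vadd]
  exact isBlock_iff_vadd_eq_or_disjoint

lemma ZMod.mem_zpowers_addRight_one_iff {n : ℕ} {g : Equiv.Perm (ZMod n)} :
    g ∈ Subgroup.zpowers (Equiv.addRight 1) ↔ ∃ c, Equiv.addRight c = g := by
  simp_rw [Subgroup.mem_zpowers_iff, Equiv.zsmul_addRight, zsmul_one]
  constructor
  · rintro ⟨k, rfl⟩
    exact ⟨_, rfl⟩
  · rintro ⟨c, rfl⟩
    exact ⟨_, congrArg _ (ZMod.intCast_zmod_cast c)⟩

lemma ZMod.addSubgroup_eq_zmultiples_index {n : ℕ} [NeZero n] (S : AddSubgroup (ZMod n)) :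
    S = AddSubgroup.zmultiples (S.index : ZMod n) := by
  have hcard : Nat.card S * S.index = n := by rw [S.card_mul_index, Nat.card_zmod]
  have hindex : S.index ∣ n := Dvd.intro_left _ hcard
  refine (AddSubgroup.eq_of_le_of_card_ge ?_ ?_).symm
  · rw [AddSubgroup.zmultiples_le, ← nsmul_one]
    exact S.nsmul_index_mem 1
  · rw [Nat.card_zmultiples, ZMod.addOrderOf_coe _ (NeZero.ne n), Nat.gcd_eq_right hindex,
      Nat.le_div_iff_mul_le (Nat.pos_of_dvd_of_pos hindex (NeZero.pos n))]
    exact hcard.le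

section residueClass

variable {n m : ℕ} {j : ZMod n}

lemma residueClass_eq_orbit :
    residueClass n m j = orbit (AddSubgroup.zmultiples (m : ZMod n)) j := by
  ext z
  simp [residueClass, mem_orbit_iff, eq_comm, add_comm]

lemma isBlock_residueClass : IsBlock (ZMod n) (residueClass n m j) := by
  rw [residueClass_eq_orbit]
  exact IsBlock.orbit_of_normal j

lemma exists_residueClass_eq_singleton_iff : (∃ e, residueClass n m j = {e}) ↔ n ∣ m := by
  rw [← ZMod.natCast_eq_zero_iff]
  constructor
  · rintro ⟨e, he⟩
    have hj : j ∈ residueClass n m j := ⟨0, by simp⟩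
    have hjm : j + m ∈ residueClass n m j := ⟨1, by simp⟩
    rw [he, Set.mem_singleton_iff] at hj hjm
    simpa [hj] using hjm
  · intro hm
    exact ⟨j, by ext z; simp [residueClass, hm]⟩

lemma residueClass_eq_univ_iff (hm : m ∣ n) : residueClass n m j = Set.univ ↔ m = 1 := by
  constructor
  · intro huniv
    obtain ⟨k, hk⟩ : j + 1 ∈ residueClass n m j := huniv ▸ Set.mem_univ _
    have h1 := congrArg (ZMod.castHom hm (ZMod m)) (add_left_cancel hk)
    rw [map_one, map_zsmul, map_natCast, ZMod.natCast_self, smul_zero] at h1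
    exact ZMod.one_eq_zero_iff.1 h1
  · rintro rfl
    refine Set.eq_univ_of_forall fun z => ⟨((z - j).cast : ℤ), ?_⟩
    rw [Nat.cast_one, zsmul_one, ZMod.intCast_zmod_cast, add_sub_cancel]

lemma exists_dvd_residueClass_eq_of_isBlock [NeZero n] {B : Set (ZMod n)}
    (hB : IsBlock (ZMod n) B) (hj : j ∈ B) : ∃ m, m ∣ n ∧ B = residueClass n m j :=
  ⟨_, (stabilizer (ZMod n) B).index_dvd_card.trans (Nat.card_zmod n).dvd, by
    rw [residueClass_eq_orbit, ← ZMod.addSubgroup_eq_zmultiples_index, hB.orbit_stabilizer_eq hj]⟩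

end residueClass

/-- (a) Every nontrivial block of a subgroup of `Equiv.Perm (ZMod n)` containing the
translation `x : k ↦ k + 1` is a residue class modulo some divisor `m` of `n` with
`2 ≤ m < n`; (b) conversely every such residue class is a nontrivial block for the
cyclic subgroup generated by `x`. -/
theorem blocks_of_full_cycle (n : ℕ) (hn : 0 < n)
    (x : Equiv.Perm (ZMod n)) (hx : x = Equiv.addRight (1 : ZMod n)) :
    (∀ G : Subgroup (Equiv.Perm (ZMod n)), x ∈ G →
      ∀ B : Set (ZMod n),
        (∀ g ∈ G, (⇑g) '' B = B ∨ Disjoint ((⇑g) '' B) B) →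
        B.Nonempty → (¬ ∃ e, B = {e}) → B ≠ Set.univ →
        ∃ m : ℕ, ∃ j : ZMod n, m ∣ n ∧ 2 ≤ m ∧ m < n ∧ B = residueClass n m j) ∧
    (∀ m : ℕ, m ∣ n → 2 ≤ m → m < n → ∀ j : ZMod n,
      (residueClass n m j).Nonempty ∧
      (∀ g ∈ Subgroup.zpowers x,
        (⇑g) '' residueClass n m j = residueClass n m j ∨
          Disjoint ((⇑g) '' residueClass n m j) (residueClass n m j)) ∧
      (¬ ∃ e, residueClass n m j = {e}) ∧
      residueClass n m j ≠ Set.univ) := by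
  subst hx
  have : NeZero n := ⟨hn.ne'⟩
  refine ⟨fun G hxG B hB ⟨j, hj⟩ hnsing hnuniv => ?_,
    fun m hdvd h2m hmlt j => ⟨⟨j, 0, by simp⟩, ?_, ?_, ?_⟩⟩
  · have hBlock : IsBlock (ZMod n) B := isBlock_iff_image_addRight.2 fun c =>
      hB _ (Subgroup.zpowers_le.2 hxG (ZMod.mem_zpowers_addRight_one_iff.2 ⟨c, rfl⟩))
    obtain ⟨m, hdvd, rfl⟩ := exists_dvd_residueClass_eq_of_isBlock hBlock hj
    have hm0 : m ≠ 0 := by rintro rfl; exact hn.ne' (zero_dvd_iff.1 hdvd)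
    have hm1 : m ≠ 1 := fun h => hnuniv ((residueClass_eq_univ_iff hdvd).2 h)
    have hm_ne : m ≠ n := fun h => hnsing (exists_residueClass_eq_singleton_iff.2 h.symm.dvd)
    exact ⟨m, j, hdvd, by omega, (Nat.le_of_dvd hn hdvd).lt_of_ne hm_ne, rfl⟩
  · intro g hg
    obtain ⟨c, rfl⟩ := ZMod.mem_zpowers_addRight_one_iff.1 hg
    exact isBlock_iff_image_addRight.1 isBlock_residueClass c
  · rw [exists_residueClass_eq_singleton_iff]
    exact Nat.not_dvd_of_pos_of_lt (by omega) hmlt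
  · rw [Ne, residueClass_eq_univ_iff hdvd]
    omega
end

section
/- Let E be a finite type whose cardinality n is not a prime number, and let G be a subgroup of Equiv.Perm E whose natural action on E is primitive, i.e. transitive and admitting no nontrivial blocks. Then every permutation of E that commutes with all elements of G is the identity; equivalently, the centralizer of G in Equiv.Perm E is the trivial subgroup. (In particular, a dessin d'enfant whose number of edges is not prime and whose monodromy group is primitive has a trivial automorphism group.) -/
/-!
The cycles of a permutation `c` commuting with `G` are permuted by `G`, so they are blocks of `G`
and hence singletons or all of `E`. A singleton cycle is a fixed point of `c`, and the fixed points
of `c` form a `G`-invariant set, so then `c = 1` by transitivity. Otherwise `c` is an `n`-cycle,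
`n = #E`. For a proper divisor `1 < d < n` of `n`, the power `c ^ d` also commutes with `G`, yet it
is neither trivial nor of order `n`.
-/

open Equiv

section

variable {E : Type*} {c : Perm E}

theorem image_setOf_sameCycle_of_commute {g : Perm E} (hcg : Commute c g) (x : E) :
    g '' {y | c.SameCycle x y} = {y | c.SameCycle (g x) y} := by
  have hconj : g * c * g⁻¹ = c := by rw [hcg.symm.eq, mul_inv_cancel_right]
  ext y
  conv_rhs => rw [Set.mem_ofPred_eq, ← hconj, Perm.sameCycle_conj]
  simp [Equiv.image_eq_preimage_symm, Perm.inv_def]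

theorem setOf_sameCycle_eq_or_disjoint (x x' : E) :
    {y | c.SameCycle x y} = {y | c.SameCycle x' y} ∨
      Disjoint {y | c.SameCycle x y} {y | c.SameCycle x' y} := by
  refine or_iff_not_imp_right.2 fun h => ?_
  obtain ⟨z, hxz, hx'z⟩ := Set.not_disjoint_iff.1 h
  have hxx' : c.SameCycle x x' := hxz.trans hx'z.symm
  ext y
  exact ⟨hxx'.symm.trans, hxx'.trans⟩

theorem orderOf_eq_card_of_forall_sameCycle [Fintype E] (hc : c ≠ 1)
    (hsame : ∀ x y, c.SameCycle x y) : orderOf c = Fintype.card E := by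
  classical
  obtain ⟨x, hx⟩ : ∃ x, c x ≠ x := by simpa [Perm.ext_iff] using hc
  have hcycle : c.IsCycle := ⟨x, hx, fun y _ => hsame x y⟩
  have hsupport : c.support = Finset.univ :=
    Finset.eq_univ_of_forall fun y =>
      Perm.mem_support.2 fun hy => hx ((hsame x y).apply_eq_self_iff.2 hy)
  rw [hcycle.orderOf, hsupport, Finset.card_univ]

variable {G : Subgroup (Perm E)}

theorem eq_one_of_commute_of_apply_eq (htrans : ∀ e f : E, ∃ g ∈ G, g e = f)
    (hc : ∀ g ∈ G, Commute c g) {x : E} (hx : c x = x) : c = 1 := by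
  ext y
  obtain ⟨g, hg, rfl⟩ := htrans x y
  rw [← Perm.mul_apply, (hc g hg).eq, Perm.mul_apply, hx, Perm.one_apply]

theorem sameCycle_of_commute_of_ne_one (htrans : ∀ e f : E, ∃ g ∈ G, g e = f)
    (hprim : ∀ B : Set E,
      (∀ g ∈ G, (⇑g) '' B = B ∨ Disjoint ((⇑g) '' B) B) →
      B.Nonempty → (∃ e, B = {e}) ∨ B = Set.univ)
    (hc : ∀ g ∈ G, Commute c g) (hc1 : c ≠ 1) (x y : E) : c.SameCycle x y := by
  have hblock (g) (hg : g ∈ G) : (⇑g) '' {y | c.SameCycle x y} = {y | c.SameCycle x y} ∨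
      Disjoint ((⇑g) '' {y | c.SameCycle x y}) {y | c.SameCycle x y} := by
    rw [image_setOf_sameCycle_of_commute (hc g hg)]
    exact setOf_sameCycle_eq_or_disjoint _ _
  rcases hprim _ hblock ⟨x, Perm.SameCycle.refl c x⟩ with ⟨e, he⟩ | huniv
  · have hfix : c x = x := by
      have hx : x ∈ {y | c.SameCycle x y} := Perm.SameCycle.refl c x
      have hcx : c x ∈ {y | c.SameCycle x y} :=
        Perm.sameCycle_apply_right.2 (Perm.SameCycle.refl c x)
      rw [he] at hx hcx
      exact hcx.trans hx.symm
    exact absurd (eq_one_of_commute_of_apply_eq htrans hc hfix) hc1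
  · exact Set.eq_univ_iff_forall.1 huniv y

theorem orderOf_eq_card_of_commute_of_ne_one [Fintype E]
    (htrans : ∀ e f : E, ∃ g ∈ G, g e = f)
    (hprim : ∀ B : Set E,
      (∀ g ∈ G, (⇑g) '' B = B ∨ Disjoint ((⇑g) '' B) B) →
      B.Nonempty → (∃ e, B = {e}) ∨ B = Set.univ)
    (hc : ∀ g ∈ G, Commute c g) (hc1 : c ≠ 1) : orderOf c = Fintype.card E :=
  orderOf_eq_card_of_forall_sameCycle hc1 (sameCycle_of_commute_of_ne_one htrans hprim hc hc1)

end

/-- If the cardinality of `E` is not prime and `G ≤ Equiv.Perm E` is primitive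
(transitive with no nontrivial blocks), then the centralizer of `G` in
`Equiv.Perm E` is trivial. -/
theorem primitive_trivial_centralizer {E : Type*} [Fintype E]
    (hnp : ¬ (Fintype.card E).Prime)
    (G : Subgroup (Equiv.Perm E))
    (htrans : ∀ e f : E, ∃ g ∈ G, g e = f)
    (hprim : ∀ B : Set E,
      (∀ g ∈ G, (⇑g) '' B = B ∨ Disjoint ((⇑g) '' B) B) →
      B.Nonempty → (∃ e, B = {e}) ∨ B = Set.univ) :
    ∀ c : Equiv.Perm E, (∀ g ∈ G, c * g = g * c) → c = 1 := by
  intro c hc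
  by_contra hc1
  have hn : 2 ≤ Fintype.card E := by
    by_contra! hn
    have : Subsingleton E := Fintype.card_le_one_iff_subsingleton.1 (by omega)
    exact hc1 (Subsingleton.elim _ _)
  obtain ⟨d, hdn, hd, hdn'⟩ := Nat.exists_dvd_of_not_prime2 hn hnp
  have hord := orderOf_eq_card_of_commute_of_ne_one htrans hprim hc hc1
  have hcd1 : c ^ d ≠ 1 := pow_ne_one_of_lt_orderOf (by omega) (hord ▸ hdn')
  have hordd := orderOf_eq_card_of_commute_of_ne_one htrans hprim
    (fun g hg => Commute.pow_left (hc g hg) d) hcd1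
  rw [orderOf_pow_of_dvd (by omega) (hord ▸ hdn), hord] at hordd
  exact (Nat.div_lt_self (by omega) hd).ne hordd
end

section
/- For every odd integer n ≥ 5 (so that the passport [n, n, n] has integer genus (n−1)/2 ≥ 2), there exist permutations x, y of Fin n such that x, y, and x*y are all n-cycles and the only permutation of Fin n commuting with both x and y is the identity. (Every passport [n, n, n] of genus at least 2 admits a dessin with a trivial automorphism group.) -/
open Equiv Equiv.Perm Fin.NatCast

theorem allOrbitsSize_natCard_of_forall_sameCycle {α : Type*} {σ : Perm α} (a : α)
    (h : ∀ b, σ.SameCycle a b) : allOrbitsSize σ (Nat.card α) := by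
  intro e
  have : permOrbit σ e = Set.univ := Set.eq_univ_of_forall fun f => (h e).symm.trans (h f)
  rw [this, Set.ncard_univ]

theorem sameCycle_of_forall_apply_eq_succ {α : Type*} {σ : Perm α} (a : ℕ → α) {p q : ℕ}
    (hpq : p ≤ q) (h : ∀ i, p ≤ i → i < q → σ (a i) = a (i + 1)) :
    σ.SameCycle (a p) (a q) := by
  induction q, hpq using Nat.le_induction with
  | base => exact SameCycle.refl _ _
  | succ q hpq ih =>
    rw [← h q hpq q.lt_succ_self]
    exact sameCycle_apply_right.mpr (ih fun i hpi hiq => h i hpi (by omega))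

theorem apply_natCast_eq_apply_zero_add {R : Type*} [AddMonoidWithOne R] {c : R → R}
    (hc : ∀ a, c (a + 1) = c a + 1) (m : ℕ) : c m = c 0 + m := by
  induction m with
  | zero => simp
  | succ m ih => rw [Nat.cast_succ, hc, ih, add_assoc]

namespace Fin

variable {n : ℕ} [NeZero n]

theorem allOrbitsSize_of_forall_sameCycle_zero {σ : Perm (Fin n)}
    (h : ∀ m < n, σ.SameCycle 0 m) : allOrbitsSize σ n := by
  simpa using allOrbitsSize_natCard_of_forall_sameCycle (0 : Fin n) fun i => by
    simpa using h i i.isLt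

theorem allOrbitsSize_addRight_one : allOrbitsSize (Equiv.addRight (1 : Fin n)) n :=
  allOrbitsSize_of_forall_sameCycle_zero fun m _ => by
    simpa using sameCycle_of_forall_apply_eq_succ (σ := Equiv.addRight 1) (fun i => (i : Fin n))
      (Nat.zero_le m) fun i _ _ => by simp

def cycle013 (n : ℕ) [NeZero n] : Perm (Fin n) := swap 0 1 * swap 1 3

theorem cycle013_apply_zero (hn : 4 ≤ n) : cycle013 n 0 = 1 := by
  have h1 : (0 : Fin n) ≠ 1 := by simp [Fin.ext_iff, Nat.mod_eq_of_lt, show 1 < n by omega]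
  have h3 : (0 : Fin n) ≠ 3 := by simp [Fin.ext_iff, Nat.mod_eq_of_lt, show 3 < n by omega]
  simp [cycle013, swap_apply_of_ne_of_ne, h1, h3]

theorem cycle013_apply_one (hn : 4 ≤ n) : cycle013 n 1 = 3 := by
  have h0 : (3 : Fin n) ≠ 0 := by simp [Fin.ext_iff, Nat.mod_eq_of_lt, show 3 < n by omega]
  have h1 : (3 : Fin n) ≠ 1 := by
    simp [Fin.ext_iff, Nat.mod_eq_of_lt, show 1 < n by omega, show 3 < n by omega]
  simp [cycle013, swap_apply_of_ne_of_ne, h0, h1]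

theorem cycle013_apply_three : cycle013 n 3 = 0 := by
  simp [cycle013]

theorem cycle013_apply_of_ne {k : Fin n} (h0 : k ≠ 0) (h1 : k ≠ 1) (h3 : k ≠ 3) :
    cycle013 n k = k := by
  simp [cycle013, swap_apply_of_ne_of_ne, h0, h1, h3]

theorem addRight_mul_cycle013_apply_natCast (hn : 4 ≤ n) (g : Fin n) {m : ℕ} (hm : m < n)
    (h0 : m ≠ 0) (h1 : m ≠ 1) (h3 : m ≠ 3) : (Equiv.addRight g * cycle013 n) m = m + g := by
  have hne : ∀ j < n, m ≠ j → (m : Fin n) ≠ j := fun j hj hmj => by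
    rwa [Ne, Fin.ext_iff, val_cast_of_lt hm, val_cast_of_lt hj]
  rw [Perm.mul_apply, cycle013_apply_of_ne, coe_addRight]
  exacts [hne 0 (by omega) h0, hne 1 (by omega) h1, hne 3 (by omega) h3]

theorem sameCycle_addRight_mul_cycle013 (hn : 4 ≤ n) (g b : ℕ) {p q : ℕ} (hpq : p ≤ q)
    (hq : b + g * q < n)
    (hS : ∀ i, p ≤ i → i < q → b + g * i ≠ 0 ∧ b + g * i ≠ 1 ∧ b + g * i ≠ 3) :
    (Equiv.addRight (g : Fin n) * cycle013 n).SameCycle (b + g * p : ℕ) (b + g * q : ℕ) := by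
  refine sameCycle_of_forall_apply_eq_succ (fun i => ((b + g * i : ℕ) : Fin n)) hpq
    fun i hpi hiq => ?_
  obtain ⟨h0, h1, h3⟩ := hS i hpi hiq
  have hi : b + g * i < n := lt_of_le_of_lt (by gcongr) hq
  rw [addRight_mul_cycle013_apply_natCast hn _ hi h0 h1 h3, ← Nat.cast_add, mul_add_one,
    add_assoc]

theorem cycle013_apply_eq_add_one_iff (hn : 5 ≤ n) {k : Fin n} :
    cycle013 n k = k + 1 ↔ k = 0 := by
  refine ⟨fun h => ?_, fun h => by rw [h, cycle013_apply_zero (by omega), zero_add]⟩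
  by_contra h0
  by_cases h1 : k = 1
  · rw [h1, cycle013_apply_one (by omega)] at h
    norm_num [Fin.ext_iff, Nat.mod_eq_of_lt, show 2 < n by omega, show 3 < n by omega] at h
  by_cases h3 : k = 3
  · rw [h3, cycle013_apply_three] at h
    norm_num [Fin.ext_iff, Nat.mod_eq_of_lt, show 4 < n by omega] at h
  rw [cycle013_apply_of_ne h0 h1 h3, left_eq_add] at h
  simp [Fin.ext_iff, Nat.mod_eq_of_lt, show 1 < n by omega] at h

theorem allOrbitsSize_addRight_one_mul_cycle013 (hn : 4 ≤ n) :
    allOrbitsSize (Equiv.addRight 1 * cycle013 n) n := by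
  set y := Equiv.addRight (1 : Fin n) * cycle013 n
  have hy : ∀ k, y k = cycle013 n k + 1 := fun _ => rfl
  have h2 : y.SameCycle 0 2 := by
    have : y 0 = 2 := by rw [hy, cycle013_apply_zero hn]; norm_num
    simpa [this] using (SameCycle.refl y 0).apply_right
  have h3 : y.SameCycle 0 3 := by
    have : y 2 = 3 := by
      rw [← Nat.cast_two (R := Fin n),
        addRight_mul_cycle013_apply_natCast hn 1 (by omega) (by omega) (by omega) (by omega)]
      norm_num
    simpa [this] using h2.apply_right
  have h1 : y.SameCycle 0 1 := by
    have : y 3 = 1 := by rw [hy, cycle013_apply_three, zero_add]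
    simpa [this] using h3.apply_right
  have h4 : y.SameCycle 0 4 := by
    have : y 1 = 4 := by rw [hy, cycle013_apply_one hn]; norm_num
    simpa [this] using h1.apply_right
  refine allOrbitsSize_of_forall_sameCycle_zero fun m hm => ?_
  rcases lt_or_ge m 4 with hm4 | hm4
  · interval_cases m
    · exact SameCycle.refl y 0
    · simpa using h1
    · simpa using h2
    · simpa using h3
  · refine h4.trans ?_
    simpa using sameCycle_addRight_mul_cycle013 hn 1 0 hm4 (by simpa) (by omega)

theorem allOrbitsSize_addRight_two_mul_cycle013 (hodd : Odd n) (hn : 5 ≤ n) :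
    allOrbitsSize (Equiv.addRight 2 * cycle013 n) n := by
  set z := Equiv.addRight (2 : Fin n) * cycle013 n
  have hz : ∀ k, z k = cycle013 n k + 2 := fun _ => rfl
  have h3 : z.SameCycle 0 3 := by
    have : z 0 = 3 := by rw [hz, cycle013_apply_zero (by omega)]; norm_num
    simpa [this] using (SameCycle.refl z 0).apply_right
  have h2 : z.SameCycle 0 2 := by
    have : z 3 = 2 := by rw [hz, cycle013_apply_three, zero_add]
    simpa [this] using h3.apply_right
  have hevens : ∀ k, 1 ≤ k → 2 * k < n → z.SameCycle 0 (2 * k : ℕ) := by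
    intro k hk hkn
    refine h2.trans ?_
    simpa using sameCycle_addRight_mul_cycle013 (by omega) 2 0 hk (by simpa) (by omega)
  obtain ⟨r, hr⟩ := hodd
  have h1 : z.SameCycle 0 1 := by
    have : z (2 * r : ℕ) = 1 := by
      rw [addRight_mul_cycle013_apply_natCast (by omega) 2 (by omega) (by omega) (by omega)
        (by omega), ← Nat.cast_two (R := Fin n), ← Nat.cast_add,
        show 2 * r + 2 = n + 1 by omega, Nat.cast_succ, natCast_self, zero_add]
    simpa [this] using (hevens r (by omega) (by omega)).apply_right
  have h5 : z.SameCycle 0 5 := by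
    have : z 1 = 5 := by rw [hz, cycle013_apply_one (by omega)]; norm_num
    simpa [this] using h1.apply_right
  have hodds : ∀ k, 2 ≤ k → 2 * k + 1 < n → z.SameCycle 0 (2 * k + 1 : ℕ) := by
    intro k hk hkn
    refine h5.trans ?_
    simpa [add_comm] using
      sameCycle_addRight_mul_cycle013 (by omega) 2 1 hk (by omega : 1 + 2 * k < n) (by omega)
  refine allOrbitsSize_of_forall_sameCycle_zero fun m hm => ?_
  obtain ⟨k, rfl | rfl⟩ := Nat.even_or_odd' m
  · rcases k with _ | k
    · simpa using SameCycle.refl z 0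
    · exact hevens (k + 1) (by omega) hm
  · rcases k with _ | _ | k
    · simpa using h1
    · simpa using h3
    · exact hodds (k + 2) (by omega) hm

theorem eq_one_of_commute_addRight_one_of_commute_cycle013 (hn : 5 ≤ n) {c : Perm (Fin n)}
    (hx : Commute c (Equiv.addRight 1)) (ht : Commute c (cycle013 n)) : c = 1 := by
  have hc : ∀ i : Fin n, c i = c 0 + i := fun i => by
    simpa using apply_natCast_eq_apply_zero_add (fun a => congr($hx.eq a)) i
  have hk : cycle013 n (c 0) = c 0 + 1 := by
    rw [← hc, ← cycle013_apply_zero (by omega)]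
    exact congr($ht.eq 0).symm
  ext i
  rw [hc, (cycle013_apply_eq_add_one_iff hn).mp hk, zero_add, Perm.one_apply]

end Fin

/-- Every passport `[n, n, n]` of genus at least 2 (i.e. `n` odd, `n ≥ 5`) admits
a dessin with a trivial automorphism group. -/
theorem passport_nnn_trivial_aut (n : ℕ) (hodd : Odd n) (hn : 5 ≤ n) :
    ∃ x y : Equiv.Perm (Fin n),
      allOrbitsSize x n ∧ allOrbitsSize y n ∧ allOrbitsSize (x * y) n ∧
      ∀ c : Equiv.Perm (Fin n), c * x = x * c → c * y = y * c → c = 1 := by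
  have : NeZero n := ⟨by omega⟩
  refine ⟨Equiv.addRight 1, Equiv.addRight 1 * Fin.cycle013 n, Fin.allOrbitsSize_addRight_one,
    Fin.allOrbitsSize_addRight_one_mul_cycle013 (by omega), ?_, fun c hx hy => ?_⟩
  · rw [← mul_assoc, ← Equiv.addRight_add, one_add_one_eq_two]
    exact Fin.allOrbitsSize_addRight_two_mul_cycle013 hodd hn
  · exact Fin.eq_one_of_commute_addRight_one_of_commute_cycle013 hn hx
      (by simpa only [inv_mul_cancel_left] using (Commute.inv_right hx).mul_right hy)
end

section
/- For all positive integers q and m, the inequality ∑_{j=0}^{⌊m/2⌋} (2^{2q/m − 1})^j / ((m − 2j)! · j!) ≤ 2^q · m^{−m/2} · Real.exp (m/2 + 2^{−q/m} · Real.sqrt m) holds in ℝ, where the factorials are cast to ℝ and the powers 2^{2q/m − 1}, 2^{−q/m}, and m^{−m/2} are real powers with real exponents. -/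
/-!
The sum is the coefficient of `x ^ m` in `exp (x + α x²) = exp x * exp (α x²)`, whose
`j`-th term at `x = R ≥ 0` is `R ^ (m - 2j) / (m - 2j)! * (α R²) ^ j / j!`. Bounding the first
factor by `exp R` and summing the second over `j` gives `coeff * R ^ m ≤ exp (R + α R²)`.
The choice `R = 2 ^ (-q/m) √m` makes `α R² = m / 2` and `R ^ m = m ^ (m/2) / 2 ^ q`.
-/

open Finset Real

theorem sum_coeff_exp_add_mul_sq_mul_pow_le_exp {A R : ℝ} (hA : 0 ≤ A) (hR : 0 ≤ R) (m : ℕ) :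
    (∑ j ∈ range (m / 2 + 1), A ^ j / (((m - 2 * j).factorial : ℝ) * (j.factorial : ℝ))) * R ^ m
      ≤ exp (R + A * R ^ 2) := by
  have hterm : ∀ j ∈ range (m / 2 + 1),
      A ^ j / (((m - 2 * j).factorial : ℝ) * (j.factorial : ℝ)) * R ^ m
        = R ^ (m - 2 * j) / (m - 2 * j).factorial * ((A * R ^ 2) ^ j / j.factorial) := by
    intro j hj
    have h2j : m - 2 * j + 2 * j = m := Nat.sub_add_cancel (by grind)
    rw [show R ^ m = R ^ (m - 2 * j) * (R ^ 2) ^ j by rw [← pow_mul, ← pow_add, h2j]]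
    ring
  rw [sum_mul, sum_congr rfl hterm, exp_add]
  calc ∑ j ∈ range (m / 2 + 1),
        R ^ (m - 2 * j) / (m - 2 * j).factorial * ((A * R ^ 2) ^ j / j.factorial)
      ≤ ∑ j ∈ range (m / 2 + 1), exp R * ((A * R ^ 2) ^ j / j.factorial) := by
        gcongr with j
        exact pow_div_factorial_le_exp _ hR _
    _ = exp R * ∑ j ∈ range (m / 2 + 1), (A * R ^ 2) ^ j / j.factorial := (mul_sum ..).symm
    _ ≤ exp R * exp (A * R ^ 2) := by gcongr; exact sum_le_exp_of_nonneg (by positivity) _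

theorem two_rpow_two_mul_sub_one_mul_sq (t : ℝ) {x : ℝ} (hx : 0 ≤ x) :
    (2 : ℝ) ^ (2 * t - 1) * ((2 : ℝ) ^ (-t) * √x) ^ 2 = x / 2 := by
  rw [mul_pow, sq_sqrt hx, ← rpow_natCast, ← rpow_mul zero_le_two, ← mul_assoc,
    ← rpow_add zero_lt_two, show 2 * t - 1 + -t * ((2 : ℕ) : ℝ) = -1 by push_cast; ring,
    rpow_neg_one]
  ring

theorem two_rpow_neg_div_mul_sqrt_pow (q : ℕ) {m : ℕ} (hm : 0 < m) :
    ((2 : ℝ) ^ (-((q : ℝ) / m)) * √(m : ℝ)) ^ m = (m : ℝ) ^ ((m : ℝ) / 2) / 2 ^ q := by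
  have hm' : (m : ℝ) ≠ 0 := by positivity
  rw [mul_pow, sqrt_eq_rpow, ← rpow_mul_natCast zero_le_two, ← rpow_mul_natCast (by positivity),
    neg_mul, div_mul_cancel₀ _ hm', rpow_neg zero_le_two, rpow_natCast, one_div_mul_eq_div,
    inv_mul_eq_div]

theorem coeff_exp_bound_general (q m : ℕ) (hm : 0 < m) :
    ∑ j ∈ Finset.range (m / 2 + 1),
      ((2 : ℝ) ^ (2 * (q : ℝ) / (m : ℝ) - 1)) ^ j /
        (((m - 2 * j).factorial : ℝ) * ((j.factorial : ℝ)))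
    ≤ (2 : ℝ) ^ q * (m : ℝ) ^ (-((m : ℝ) / 2)) *
        Real.exp ((m : ℝ) / 2 + (2 : ℝ) ^ (-((q : ℝ) / (m : ℝ))) * Real.sqrt m) := by
  set R := (2 : ℝ) ^ (-((q : ℝ) / m)) * √(m : ℝ)
  have hR : 0 < R := by positivity
  have hAR : (2 : ℝ) ^ (2 * (q : ℝ) / m - 1) * R ^ 2 = m / 2 := by
    rw [mul_div_assoc]
    exact two_rpow_two_mul_sub_one_mul_sq _ (Nat.cast_nonneg m)
  have hbound := sum_coeff_exp_add_mul_sq_mul_pow_le_exp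
    (A := (2 : ℝ) ^ (2 * (q : ℝ) / m - 1)) (by positivity) hR.le m
  rw [← le_div_iff₀ (by positivity), hAR, two_rpow_neg_div_mul_sqrt_pow q hm] at hbound
  refine hbound.trans_eq ?_
  rw [rpow_neg (Nat.cast_nonneg m), add_comm]
  field_simp

/-- Bound for the coefficient `∑_{j≤⌊m/2⌋} α^j/((m−2j)!·j!)` (with `α = 2^{2q/m−1}`)
of `x^m` in `exp(x + αx²)`, used in the clean case `b = 2`. -/
theorem coeff_exp_bound (q m : ℕ) (hq : 0 < q) (hm : 0 < m) :
    ∑ j ∈ Finset.range (m / 2 + 1),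
      ((2 : ℝ) ^ (2 * (q : ℝ) / (m : ℝ) - 1)) ^ j /
        (((m - 2 * j).factorial : ℝ) * ((j.factorial : ℝ)))
    ≤ (2 : ℝ) ^ q * (m : ℝ) ^ (-((m : ℝ) / 2)) *
        Real.exp ((m : ℝ) / 2 + (2 : ℝ) ^ (-((q : ℝ) / (m : ℝ))) * Real.sqrt m) :=
  coeff_exp_bound_general q m hm
end

section
/- There do not exist permutations x, y of Fin 15 such that every orbit of x has size 3, every orbit of y has size 3, every orbit of (x*y)⁻¹ has size 3, the subgroup G of Equiv.Perm (Fin 15) generated by x and y acts transitively on Fin 15, and Fintype.card G = 15. Likewise, there do not exist permutations x, y of Fin 15 such that every orbit of x, of y, and of (x*y)⁻¹ has size 5, the generated subgroup acts transitively, and has cardinality 15. (The uniform passports [3^5, 3^5, 3^5] of genus 1 and [5^3, 5^3, 5^3] of genus 4 admit no regular dessin.) -/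
/-!
If every orbit of a permutation has size `a`, its `a`-th power is the identity, so the two
generators `x`, `y` of the monodromy group `G` have order dividing `p ∈ {3, 5}`. Since `|G| = 15`
and `5 ≢ 1 (mod 3)`, `3 ≢ 1 (mod 5)`, Sylow's theorems give a unique Sylow `p`-subgroup
of `G`; it contains both generators, so it is all of `G`, which is absurd as `15` is
not a power of `p`.
-/

open Equiv Subgroup

theorem permOrbit_eq_orbit_zpowers_s19 {E : Type*} (σ : Perm E) (e : E) :
    permOrbit σ e = MulAction.orbit (zpowers σ) e := by
  ext f
  simp only [permOrbit, MulAction.mem_orbit_iff, exists_zpowers]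
  rfl

theorem pow_eq_one_of_allOrbitsSize {E : Type*} [Finite E] {σ : Perm E} {a : ℕ}
    (h : allOrbitsSize σ a) : σ ^ a = 1 := by
  classical
  have := Fintype.ofFinite E
  ext e
  have hperiod : Function.minimalPeriod σ e = a := by
    rw [← h e, permOrbit_eq_orbit_zpowers_s19, Set.ncard_eq_toFinset_card', Set.toFinset_card]
    exact MulAction.minimalPeriod_eq_card (α := Perm E) σ e
  rw [Perm.coe_pow, ← hperiod, Function.isPeriodicPt_minimalPeriod σ e]
  rfl

theorem Sylow.subsingleton_of_card_eq_mul_prime {G : Type*} [Group G] [Finite G] {p q : ℕ}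
    [Fact p.Prime] (hq : q.Prime) (hcard : Nat.card G = p * q) (hqp : ¬ q ≡ 1 [MOD p]) :
    Subsingleton (Sylow p G) := by
  have hcop : (Nat.card (Sylow p G)).Coprime p := by
    simpa using (card_sylow_modEq_one p G).gcd_eq
  have hdvd : Nat.card (Sylow p G) ∣ q :=
    hcop.dvd_of_dvd_mul_left (hcard ▸ (Sylow.card_dvd_index default).trans (index_dvd_card _))
  rcases hq.eq_one_or_self_of_dvd _ hdvd with h | h
  · exact (Nat.card_eq_one_iff_unique.mp h).1
  · exact absurd (h ▸ card_sylow_modEq_one p G) hqp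

theorem IsPGroup.of_closure_eq_top {G : Type*} [Group G] [Finite G] {p : ℕ} [Fact p.Prime]
    [Subsingleton (Sylow p G)] {s : Set G} (hs : closure s = ⊤)
    (hpow : ∀ g ∈ s, ∃ k, g ^ p ^ k = 1) : IsPGroup p G := by
  let P : Sylow p G := default
  have hsP : s ⊆ P := fun g hg => by
    obtain ⟨k, hk⟩ := hpow g hg
    have hg : IsPGroup p (zpowers g) :=
      IsPGroup.of_card_dvd_pow (n := k) (Nat.card_zpowers g ▸ orderOf_dvd_of_pow_eq_one hk)
    obtain ⟨Q, hQ⟩ := hg.exists_le_sylow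
    exact Subsingleton.elim Q P ▸ hQ (mem_zpowers g)
  have hP : (P : Subgroup G) = ⊤ := top_le_iff.mp (hs ▸ (closure_le _).mpr hsP)
  exact P.isPGroup'.of_equiv (hP ▸ topEquiv)

theorem Subgroup.card_closure_ne_mul_prime {G : Type*} [Group G] {p q : ℕ} [hp : Fact p.Prime]
    (hq : q.Prime) (hpq : p ≠ q) (hqp : ¬ q ≡ 1 [MOD p]) {s : Set G}
    (hpow : ∀ g ∈ s, ∃ k, g ^ p ^ k = 1) : Nat.card (closure s) ≠ p * q := by
  intro hcard
  have : Finite (closure s) :=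
    Nat.finite_of_card_ne_zero (hcard ▸ mul_ne_zero hp.out.ne_zero hq.ne_zero)
  have := Sylow.subsingleton_of_card_eq_mul_prime hq hcard hqp
  have hgen : ∀ g ∈ ((↑) : closure s → G) ⁻¹' s, ∃ k, g ^ p ^ k = 1 := fun g hg =>
    (hpow g hg).imp fun _ hk => Subtype.ext (by simpa using hk)
  obtain ⟨n, hn⟩ :=
    IsPGroup.iff_card.mp (IsPGroup.of_closure_eq_top closure_closure_coe_preimage hgen)
  have hqdvd : q ∣ p ^ n := hn ▸ hcard ▸ dvd_mul_left q p
  exact hpq ((Nat.prime_dvd_prime_iff_eq hq hp.out).mp (hq.dvd_of_dvd_pow hqdvd)).symm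

theorem card_closure_pair_ne_mul_prime_of_allOrbitsSize {E : Type*} [Finite E] {p q : ℕ}
    [Fact p.Prime] (hq : q.Prime) (hpq : p ≠ q) (hqp : ¬ q ≡ 1 [MOD p]) {x y : Perm E}
    (hx : allOrbitsSize x p) (hy : allOrbitsSize y p) :
    Nat.card (closure ({x, y} : Set (Perm E))) ≠ p * q := by
  refine card_closure_ne_mul_prime hq hpq hqp fun g hg => ⟨1, ?_⟩
  rcases hg with rfl | rfl
  · simpa using pow_eq_one_of_allOrbitsSize hx
  · simpa using pow_eq_one_of_allOrbitsSize hy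

/-- The uniform passports `[3^5, 3^5, 3^5]` and `[5^3, 5^3, 5^3]` (with 15 edges)
admit no regular dessin. -/
theorem no_regular_dessin_deg15 :
    (¬ ∃ x y : Equiv.Perm (Fin 15),
      allOrbitsSize x 3 ∧ allOrbitsSize y 3 ∧ allOrbitsSize (x * y)⁻¹ 3 ∧
      (∀ e f : Fin 15,
        ∃ g ∈ Subgroup.closure ({x, y} : Set (Equiv.Perm (Fin 15))), g e = f) ∧
      Nat.card (Subgroup.closure ({x, y} : Set (Equiv.Perm (Fin 15)))) = 15) ∧
    (¬ ∃ x y : Equiv.Perm (Fin 15),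
      allOrbitsSize x 5 ∧ allOrbitsSize y 5 ∧ allOrbitsSize (x * y)⁻¹ 5 ∧
      (∀ e f : Fin 15,
        ∃ g ∈ Subgroup.closure ({x, y} : Set (Equiv.Perm (Fin 15))), g e = f) ∧
      Nat.card (Subgroup.closure ({x, y} : Set (Equiv.Perm (Fin 15)))) = 15) := by
  have : Fact (Nat.Prime 5) := ⟨by norm_num⟩
  constructor
  · rintro ⟨x, y, hx, hy, -, -, hcard⟩
    exact card_closure_pair_ne_mul_prime_of_allOrbitsSize (q := 5) (by norm_num) (by norm_num)
      (by decide) hx hy hcard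
  · rintro ⟨x, y, hx, hy, -, -, hcard⟩
    exact card_closure_pair_ne_mul_prime_of_allOrbitsSize (q := 3) (by norm_num) (by norm_num)
      (by decide) hx hy hcard
end
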